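/- arXiv:1706.02029 — 6 statements merged into one kernel-verified Lean document; each statement's English description precedes it below -/
import Mathlib

section
/- In a directed graph D=(V,A), for a subset U ⊆ V there exists a branching B ⊆ A with R(B)=U (vertices with no entering arc of B) if and only if U intersects every source component of D (a strong component with no entering arc). -/
open scoped Classical
open Finset

variable {V : Type*} [Fintype V] [DecidableEq V]

/-- A closed directed walk (cycle) using arcs of `B`. -/
def HasCycle (B : Finset (V × V)) : Prop :=
  ∃ (n : ℕ) (f : Fin (n + 1) → V), ∀ i : Fin (n + 1), (f i, f (i + 1)) ∈ B

/-- `B` is a branching in the digraph with arc set `A`: a subset of `A`,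
in-degree at most one at each vertex, and no directed cycle. -/
def IsBranching (A B : Finset (V × V)) : Prop :=
  B ⊆ A ∧ (∀ v : V, (B.filter (fun a => a.2 = v)).card ≤ 1) ∧ ¬ HasCycle B

/-- `R(B)`: the set of vertices with no arc of `B` entering them. -/
def rootSet (B : Finset (V × V)) : Finset V :=
  Finset.univ.filter (fun v => ∀ a ∈ B, a.2 ≠ v)

/-- Reachability via directed paths using arcs of `A`. -/
def Reaches (A : Finset (V × V)) (u v : V) : Prop :=
  Relation.ReflTransGen (fun x y => (x, y) ∈ A) u v

/-- A source component: a strongly connected component with no entering arc. -/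
def IsSourceComponent (A : Finset (V × V)) (K : Set V) : Prop :=
  (∃ v : V, K = {u : V | Reaches A u v ∧ Reaches A v u}) ∧
    ∀ a ∈ A, a.2 ∈ K → a.1 ∈ K

/-!
If the root set of a branching `B ⊆ A` missed a source component `K`, every vertex of `K` would
have its `B`-parent in `K`, as no arc enters `K`; following parents inside the finite set `K`
closes a directed cycle.

Conversely, every vertex is reachable from some source component, so if `U` meets all of them,
every vertex is reachable from `U`. Choosing for each vertex outside `U` an entering arc from a
vertex strictly closer to `U` gives a branching with root set `U`: it is acyclic because the
distance from `U` increases along its arcs.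
-/

omit [Fintype V] [DecidableEq V] in
lemma hasCycle_of_isPeriodicPt {B : Finset (V × V)} {p : V → V} {x : V} {n : ℕ}
    (hx : Function.IsPeriodicPt p (n + 1) x) (hB : ∀ k, (p^[k + 1] x, p^[k] x) ∈ B) : HasCycle B := by
  refine ⟨n, fun t => p^[(-t).val] x, fun t => ?_⟩
  have hval : (-t).val = ((-(t + 1)).val + 1) % (n + 1) := by
    rw [← Nat.add_mod_mod, ← Fin.val_one', ← Fin.val_add, neg_add, neg_add_cancel_right]
  simp only
  rw [hval, hx.iterate_mod_apply]
  exact hB _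

omit [DecidableEq V] in
lemma hasCycle_of_forall_exists_arc_into {B : Finset (V × V)} {S : Set V} (hS : S.Nonempty)
    (h : ∀ v ∈ S, ∃ u ∈ S, (u, v) ∈ B) : HasCycle B := by
  choose! p hpS hpB using h
  obtain ⟨v, hv⟩ := hS
  have hiter : ∀ k, p^[k] v ∈ S := fun k => (Set.MapsTo.iterate hpS k) hv
  obtain ⟨i, j, hij, heq⟩ :=
    Set.finite_univ.exists_lt_map_eq_of_forall_mem (f := fun k => p^[k] v) fun _ => Set.mem_univ _
  obtain ⟨n, rfl⟩ : ∃ n, j = i + (n + 1) := ⟨j - i - 1, by omega⟩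
  refine hasCycle_of_isPeriodicPt (p := p) (x := p^[i] v) (n := n) ?_ fun k => ?_
  · rw [Function.IsPeriodicPt, Function.IsFixedPt, ← Function.iterate_add_apply, add_comm]
    exact heq.symm
  · rw [Function.iterate_succ_apply']
    exact hpB _ (by rw [← Function.iterate_add_apply]; exact hiter _)

omit [Fintype V] [DecidableEq V] in
lemma not_hasCycle_of_lt {B : Finset (V × V)} (d : V → ℕ) (hd : ∀ a ∈ B, d a.1 < d a.2) :
    ¬ HasCycle B := by
  rintro ⟨n, f, hf⟩
  have hlt : ∑ i, d (f i) < ∑ i, d (f (i + 1)) :=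
    Finset.sum_lt_sum_of_nonempty univ_nonempty fun i _ => hd _ (hf i)
  rw [Fintype.sum_equiv (Equiv.addRight 1) (fun i => d (f (i + 1))) (fun i => d (f i))
    fun _ => rfl] at hlt
  exact lt_irrefl _ hlt

omit [DecidableEq V] in
/-- A vertex whose ancestor set is minimal among the ancestors of `v` lies in a source component. -/
lemma exists_isSourceComponent_reaches (A : Finset (V × V)) (v : V) :
    ∃ K, IsSourceComponent A K ∧ ∀ u ∈ K, Reaches A u v := by
  let ancestors : V → Set V := fun w => {x | Reaches A x w}
  obtain ⟨w, hwv, hmin⟩ := (InvImage.wf ancestors wellFounded_lt).has_min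
    {w | Reaches A w v} ⟨v, Relation.ReflTransGen.refl⟩
  refine ⟨{u | Reaches A u w ∧ Reaches A w u}, ⟨⟨w, rfl⟩, fun a ha hK => ?_⟩,
    fun u hu => hu.1.trans hwv⟩
  have haw : Reaches A a.1 w := (Relation.ReflTransGen.single ha).trans hK.1
  have hsub : ancestors a.1 ⊆ ancestors w := fun x hx => Relation.ReflTransGen.trans hx haw
  have heq : ancestors a.1 = ancestors w :=
    hsub.eq_or_ssubset.resolve_right (hmin a.1 (haw.trans hwv))
  have hwa : w ∈ ancestors a.1 := heq ▸ Relation.ReflTransGen.refl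
  exact ⟨haw, hwa⟩

lemma exists_mem_rootSet_of_isSourceComponent {A B : Finset (V × V)} {K : Set V}
    (hBA : B ⊆ A) (hB : ¬ HasCycle B) (hK : IsSourceComponent A K) :
    ∃ v ∈ rootSet B, v ∈ K := by
  obtain ⟨⟨w, hKw⟩, hclosed⟩ := hK
  have hwK : w ∈ K := hKw ▸ ⟨.refl, .refl⟩
  by_contra! hroot
  refine hB (hasCycle_of_forall_exists_arc_into ⟨w, hwK⟩ fun v hv => ?_)
  have : ∃ a ∈ B, a.2 = v := by
    simpa [rootSet] using fun h => hroot v h hv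
  obtain ⟨a, haB, rfl⟩ := this
  exact ⟨a.1, hclosed a (hBA haB) hv, haB⟩

def reachableWithin (A : Finset (V × V)) (U : Finset V) : ℕ → Set V
  | 0 => U
  | n + 1 => reachableWithin A U n ∪ {v | ∃ u ∈ reachableWithin A U n, (u, v) ∈ A}

omit [Fintype V] [DecidableEq V] in
lemma exists_mem_reachableWithin {A : Finset (V × V)} {U : Finset V} {u v : V} (hu : u ∈ U)
    (huv : Reaches A u v) : ∃ n, v ∈ reachableWithin A U n := by
  induction huv with
  | refl => exact ⟨0, hu⟩
  | tail _ harc ih =>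
    obtain ⟨n, hn⟩ := ih
    exact ⟨n + 1, Or.inr ⟨_, hn, harc⟩⟩

omit [Fintype V] [DecidableEq V] in
lemma exists_potential_of_reaches {A : Finset (V × V)} {U : Finset V}
    (h : ∀ v, ∃ u ∈ U, Reaches A u v) :
    ∃ d : V → ℕ, ∀ v ∉ U, ∃ u, (u, v) ∈ A ∧ d u < d v := by
  have hex : ∀ v, ∃ n, v ∈ reachableWithin A U n := fun v =>
    let ⟨_, hu, huv⟩ := h v
    exists_mem_reachableWithin hu huv
  refine ⟨fun v => Nat.find (hex v), fun v hv => ?_⟩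
  show ∃ u, (u, v) ∈ A ∧ Nat.find (hex u) < Nat.find (hex v)
  obtain ⟨m, hm⟩ : ∃ m, Nat.find (hex v) = m + 1 :=
    Nat.exists_eq_succ_of_ne_zero fun h0 => hv ((Nat.find_eq_zero (hex v)).1 h0)
  have hnot : v ∉ reachableWithin A U m := Nat.find_min (hex v) (by omega)
  have hmem := Nat.find_spec (hex v)
  rw [hm] at hmem
  obtain ⟨u, hu, hua⟩ := hmem.resolve_left hnot
  exact ⟨u, hua, hm ▸ Nat.lt_succ_of_le (Nat.find_min' (hex u) hu)⟩

lemma exists_branching_of_potential {A : Finset (V × V)} {U : Finset V} (d : V → ℕ)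
    (h : ∀ v ∉ U, ∃ u, (u, v) ∈ A ∧ d u < d v) :
    ∃ B, IsBranching A B ∧ rootSet B = U := by
  choose! g hgA hgd using h
  set B := (univ.filter (· ∉ U)).image fun v => (g v, v)
  have mem_B : ∀ a, a ∈ B ↔ a.2 ∉ U ∧ a = (g a.2, a.2) := by
    rintro ⟨x, y⟩
    simp [B, eq_comm, and_comm]
  refine ⟨B, ⟨fun a ha => ?_, fun v => ?_, not_hasCycle_of_lt d fun a ha => ?_⟩, ?_⟩
  · obtain ⟨hU, ha⟩ := (mem_B a).1 ha
    exact ha ▸ hgA _ hU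
  · refine card_le_one.2 fun a ha b hb => ?_
    rw [mem_filter, mem_B] at ha hb
    rw [ha.1.2, hb.1.2, ha.2, hb.2]
  · obtain ⟨hU, ha⟩ := (mem_B a).1 ha
    rw [ha]
    exact hgd _ hU
  · ext v
    simp only [rootSet, mem_filter, mem_univ, true_and]
    refine ⟨fun hv => by_contra fun hU => hv _ ((mem_B (g v, v)).2 ⟨hU, rfl⟩) rfl, ?_⟩
    rintro hv a ha rfl
    exact ((mem_B a).1 ha).1 hv

theorem branching_with_root_set_iff_meets_source_components
    (A : Finset (V × V)) (U : Finset V) :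
    (∃ B : Finset (V × V), IsBranching A B ∧ rootSet B = U) ↔
      ∀ K : Set V, IsSourceComponent A K → ∃ u ∈ U, u ∈ K := by
  constructor
  · rintro ⟨B, ⟨hBA, -, hB⟩, rfl⟩ K hK
    exact exists_mem_rootSet_of_isSourceComponent hBA hB hK
  · intro hU
    have hreach : ∀ v, ∃ u ∈ U, Reaches A u v := fun v => by
      obtain ⟨K, hK, hKv⟩ := exists_isSourceComponent_reaches A v
      obtain ⟨u, hu, huK⟩ := hU K hK
      exact ⟨u, hu, hKv u huK⟩
    obtain ⟨d, hd⟩ := exists_potential_of_reaches hreach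
    exact exists_branching_of_potential d hd
end

section
/- Let D=(V,A) be a digraph whose arc set is partitioned into two branchings B₁ and B₂, and let s ∈ R(B₁) \ R(B₂). Then there exist branchings B₁', B₂' partitioning A such that either R(B₁')=R(B₁)\{s} and R(B₂')=R(B₂)∪{s}, or there exists t ∈ R(B₂)\R(B₁) with R(B₁')=(R(B₁)\{s})∪{t} and R(B₂')=(R(B₂)∪{s})\{t}. -/
open scoped Classical
open Finset

variable {V : Type*} [Fintype V] [DecidableEq V]

/-!
Two disjoint branchings with root sets `R₁`, `R₂` covering `A` exist iff (Edmonds' branching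
theorem for two branchings, proved as by Lovász) every vertex `v` has in-degree
`2 - [v ∈ R₁] - [v ∈ R₂]` and every nonempty `U` is entered by at least as many arcs as there
are `Rᵢ` disjoint from `U`. Moving `s` from `R₁` to `R₂`, possibly together with moving some
`t` back, keeps the degree condition, and the cut condition can then only fail on sets closed
under in-neighbours. The smallest such set containing `s` is its set of ancestors `W`. If `R₁`
meets `W` outside `s`, moving `s` alone works; otherwise `W` contains a root `t` of `B₂`, and
swapping `s` and `t` works.
-/

set_option linter.unusedSectionVars false

lemma hasCycle_iff_exists_pred {B : Finset (V × V)} :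
    HasCycle B ↔ ∃ U : Finset V, U.Nonempty ∧ ∀ v ∈ U, ∃ u ∈ U, (u, v) ∈ B := by
  constructor
  · rintro ⟨n, f, hf⟩
    refine ⟨univ.image f, ⟨f 0, mem_image_of_mem f (mem_univ _)⟩, ?_⟩
    simp only [mem_image, mem_univ, true_and, forall_exists_index, forall_apply_eq_imp_iff,
      exists_exists_eq_and]
    exact fun i => ⟨i - 1, by simpa using hf (i - 1)⟩
  · rintro ⟨U, ⟨v₀, hv₀⟩, hpred⟩
    choose! F hFU hF using hpred
    have hU : ∀ k, F^[k] v₀ ∈ U := fun k => by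
      induction k with
      | zero => exact hv₀
      | succ k ih => rw [Function.iterate_succ_apply']; exact hFU _ ih
    obtain ⟨i, j, hij, heq⟩ : ∃ i j, i < j ∧ F^[i] v₀ = F^[j] v₀ := by
      obtain ⟨i, j, hne, heq⟩ := Finite.exists_ne_map_eq_of_infinite fun k => F^[k] v₀
      rcases lt_or_gt_of_ne hne with h | h
      exacts [⟨i, j, h, heq⟩, ⟨j, i, h, heq.symm⟩]
    refine ⟨j - i - 1, fun l => F^[j - l] v₀, fun l => ?_⟩
    have hl : (l : ℕ) < j := by omega
    have hnext : F^[j - ↑(l + 1)] v₀ = F^[j - l - 1] v₀ := by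
      rcases eq_or_ne l (Fin.last _) with rfl | hlast
      · rw [Fin.last_add_one, Fin.val_zero, Nat.sub_zero, ← heq, Fin.val_last]
        congr 1
        omega
      · rw [Fin.val_add_one_of_lt (Fin.lt_last_iff_ne_last.2 hlast)]
        rfl
    dsimp only
    rw [hnext, show j - l = j - l - 1 + 1 by omega, Function.iterate_succ_apply']
    exact hF _ (hU _)

lemma not_hasCycle_insert {B : Finset (V × V)} {e : V × V} (hB : ¬ HasCycle B)
    (he : ∀ a ∈ insert e B, a.2 ≠ e.1) : ¬ HasCycle (insert e B) := by
  rw [hasCycle_iff_exists_pred] at hB ⊢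
  rintro ⟨U, hU, hpred⟩
  refine hB ⟨U, hU, fun v hv => ?_⟩
  have he₁ : e.1 ∉ U := fun h => by
    obtain ⟨w, -, hw⟩ := hpred _ h
    exact he _ hw rfl
  obtain ⟨u, hu, huv⟩ := hpred v hv
  exact ⟨u, hu, (mem_insert.1 huv).resolve_left fun h => he₁ (h ▸ hu)⟩

def indeg (B : Finset (V × V)) (v : V) : ℕ := #(B.filter fun a => a.2 = v)

def cutIn (A : Finset (V × V)) (U : Finset V) : ℕ := #(A.filter fun a => a.2 ∈ U ∧ a.1 ∉ U)

def InClosed (A : Finset (V × V)) (U : Finset V) : Prop := ∀ a ∈ A, a.2 ∈ U → a.1 ∈ U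

noncomputable def ancestors (A : Finset (V × V)) (x : V) : Finset V :=
  univ.filter fun w => Reaches A w x

section Counting

variable {A B₁ B₂ : Finset (V × V)}

lemma card_filter_erase_add (p : V × V → Prop) [DecidablePred p] {a : V × V} (ha : a ∈ A) :
    #((A.erase a).filter p) + (if p a then 1 else 0) = #(A.filter p) := by
  rw [filter_erase]
  split_ifs with h
  · exact card_erase_add_one (mem_filter.2 ⟨ha, h⟩)
  · rw [erase_eq_of_notMem fun h' => h (mem_filter.1 h').2, add_zero]

lemma indeg_union (h : Disjoint B₁ B₂) (v : V) :
    indeg (B₁ ∪ B₂) v = indeg B₁ v + indeg B₂ v := by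
  rw [indeg, filter_union, card_union_of_disjoint (disjoint_filter_filter h), indeg, indeg]

lemma cutIn_union (h : Disjoint B₁ B₂) (U : Finset V) :
    cutIn (B₁ ∪ B₂) U = cutIn B₁ U + cutIn B₂ U := by
  rw [cutIn, filter_union, card_union_of_disjoint (disjoint_filter_filter h), cutIn, cutIn]

lemma cutIn_inter_add_cutIn_union_le (U U' : Finset V) :
    cutIn A (U ∩ U') + cutIn A (U ∪ U') ≤ cutIn A U + cutIn A U' := by
  simp only [cutIn, card_filter, ← sum_add_distrib]
  refine sum_le_sum fun a _ => ?_
  by_cases a.2 ∈ U <;> by_cases a.2 ∈ U' <;> by_cases a.1 ∈ U <;> by_cases a.1 ∈ U' <;>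
    simp_all

lemma cutIn_eq_zero_iff {U : Finset V} : cutIn A U = 0 ↔ InClosed A U := by
  simp only [cutIn, card_eq_zero, filter_eq_empty_iff, InClosed, not_and, not_not]

end Counting

section Ancestors

variable {A : Finset (V × V)} {U : Finset V} {x : V}

lemma mem_ancestors_self : x ∈ ancestors A x := by
  simp only [ancestors, mem_filter, mem_univ, true_and]
  exact Relation.ReflTransGen.refl

lemma inClosed_ancestors : InClosed A (ancestors A x) := by
  intro a ha hx
  simp only [ancestors, mem_filter, mem_univ, true_and] at hx ⊢
  exact Relation.ReflTransGen.head ha hx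

lemma ancestors_subset (hU : InClosed A U) (hx : x ∈ U) : ancestors A x ⊆ U := by
  intro w hw
  simp only [ancestors, mem_filter, mem_univ, true_and] at hw
  induction hw using Relation.ReflTransGen.head_induction_on with
  | refl => exact hx
  | head hab _ ih => exact hU _ hab ih

end Ancestors

section Branchings

variable {A B : Finset (V × V)}

lemma mem_rootSet {v : V} : v ∈ rootSet B ↔ ∀ a ∈ B, a.2 ≠ v := by
  simp [rootSet]

lemma rootSet_insert (e : V × V) (B : Finset (V × V)) :
    rootSet (insert e B) = (rootSet B).erase e.2 := by
  ext v
  simp only [mem_rootSet, mem_erase, forall_mem_insert]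
  tauto

lemma IsBranching.mono {A' : Finset (V × V)} (h : IsBranching A B) (hA : A ⊆ A') :
    IsBranching A' B :=
  ⟨h.1.trans hA, h.2⟩

lemma IsBranching.indeg_add_ite (h : IsBranching A B) (v : V) :
    indeg B v + (if v ∈ rootSet B then 1 else 0) = 1 := by
  have hle : indeg B v ≤ 1 := h.2.1 v
  have hzero : indeg B v = 0 ↔ v ∈ rootSet B := by
    simp [indeg, rootSet, filter_eq_empty_iff]
  by_cases hv : v ∈ rootSet B
  · simp [hv, hzero.2 hv]
  · simp only [hv, if_false]
    have := mt hzero.1 hv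
    omega

/-- Without an entering arc, the in-neighbours inside `U` would close up into a cycle. -/
lemma IsBranching.one_le_cutIn (h : IsBranching A B) {U : Finset V} (hU : U.Nonempty)
    (hR : Disjoint (rootSet B) U) : 1 ≤ cutIn B U := by
  by_contra! h0
  have hcl : InClosed B U := cutIn_eq_zero_iff.1 (by omega)
  refine h.2.2 (hasCycle_iff_exists_pred.2 ⟨U, hU, fun v hv => ?_⟩)
  obtain ⟨a, ha, rfl⟩ : ∃ a ∈ B, a.2 = v := by
    by_contra! hno
    exact disjoint_left.1 hR (mem_rootSet.2 hno) hv
  exact ⟨a.1, hcl a ha hv, ha⟩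

lemma IsBranching.insert (h : IsBranching A B) {e : V × V} (he : e ∈ A)
    (h₁ : e.1 ∈ rootSet B) (h₂ : e.2 ∈ rootSet B) (hne : e.1 ≠ e.2) :
    IsBranching A (insert e B) := by
  refine ⟨insert_subset he h.1, fun v => ?_, not_hasCycle_insert h.2.2 ?_⟩
  · rw [filter_insert]
    split_ifs with hv
    · subst hv
      have : B.filter (fun a => a.2 = e.2) = ∅ :=
        filter_eq_empty_iff.2 (mem_rootSet.1 h₂)
      simp [this]
    · exact h.2.1 v
  · simp only [forall_mem_insert]
    exact ⟨hne.symm, mem_rootSet.1 h₁⟩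

end Branchings

def InDegCond (A : Finset (V × V)) (R₁ R₂ : Finset V) : Prop :=
  ∀ v, indeg A v + (if v ∈ R₁ then 1 else 0) + (if v ∈ R₂ then 1 else 0) = 2

def CutCond (A : Finset (V × V)) (R₁ R₂ : Finset V) : Prop :=
  ∀ U : Finset V, U.Nonempty →
    (if Disjoint R₁ U then 1 else 0) + (if Disjoint R₂ U then 1 else 0) ≤ cutIn A U

def HasBranchingPartition (A : Finset (V × V)) (R₁ R₂ : Finset V) : Prop :=
  ∃ B₁ B₂ : Finset (V × V), IsBranching A B₁ ∧ IsBranching A B₂ ∧ B₁ ∪ B₂ = A ∧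
    Disjoint B₁ B₂ ∧ rootSet B₁ = R₁ ∧ rootSet B₂ = R₂

section Conditions

variable {A : Finset (V × V)} {R₁ R₂ : Finset V}

lemma InDegCond.symm (h : InDegCond A R₁ R₂) : InDegCond A R₂ R₁ :=
  fun v => by have := h v; omega

lemma CutCond.symm (h : CutCond A R₁ R₂) : CutCond A R₂ R₁ :=
  fun U hU => by have := h U hU; omega

lemma HasBranchingPartition.symm (h : HasBranchingPartition A R₁ R₂) :
    HasBranchingPartition A R₂ R₁ := by
  obtain ⟨B₁, B₂, hb₁, hb₂, hun, hdj, hr₁, hr₂⟩ := h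
  exact ⟨B₂, B₁, hb₂, hb₁, union_comm B₁ B₂ ▸ hun, hdj.symm, hr₂, hr₁⟩

lemma HasBranchingPartition.inDegCond (h : HasBranchingPartition A R₁ R₂) :
    InDegCond A R₁ R₂ := by
  obtain ⟨B₁, B₂, hb₁, hb₂, rfl, hdj, rfl, rfl⟩ := h
  intro v
  have h₁ := hb₁.indeg_add_ite v
  have h₂ := hb₂.indeg_add_ite v
  rw [indeg_union hdj]
  omega

lemma HasBranchingPartition.cutCond (h : HasBranchingPartition A R₁ R₂) :
    CutCond A R₁ R₂ := by
  obtain ⟨B₁, B₂, hb₁, hb₂, rfl, hdj, rfl, rfl⟩ := h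
  intro U hU
  rw [cutIn_union hdj]
  have h₁ : (if Disjoint (rootSet B₁) U then 1 else 0) ≤ cutIn B₁ U := by
    split_ifs with hd
    exacts [hb₁.one_le_cutIn hU hd, Nat.zero_le _]
  have h₂ : (if Disjoint (rootSet B₂) U then 1 else 0) ≤ cutIn B₂ U := by
    split_ifs with hd
    exacts [hb₂.one_le_cutIn hU hd, Nat.zero_le _]
  omega

lemma CutCond.not_disjoint_of_inClosed (h : CutCond A R₁ R₂) {U : Finset V}
    (hU : U.Nonempty) (hcl : InClosed A U) : ¬ Disjoint R₁ U ∧ ¬ Disjoint R₂ U := by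
  have := h U hU
  rw [cutIn_eq_zero_iff.2 hcl] at this
  constructor <;> intro hd <;> simp [hd] at this

end Conditions

/-- Sets of value `1` are the tight sets that the augmentation step uncrosses. -/
def rootedCut (A : Finset (V × V)) (R U : Finset V) : ℕ :=
  cutIn A U + if Disjoint R U then 0 else 1

section Sufficiency

variable {A : Finset (V × V)} {R₁ R₂ : Finset V}

lemma rootedCut_inter_add_rootedCut_union_le (R U U' : Finset V) :
    rootedCut A R (U ∩ U') + rootedCut A R (U ∪ U') ≤ rootedCut A R U + rootedCut A R U' := by
  have hcut := cutIn_inter_add_cutIn_union_le (A := A) U U'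
  have hinter : ¬ Disjoint R (U ∩ U') → ¬ Disjoint R U ∧ ¬ Disjoint R U' := fun h =>
    ⟨fun hd => h (hd.mono_right inter_subset_left), fun hd => h (hd.mono_right inter_subset_right)⟩
  simp only [rootedCut, disjoint_union_right]
  split_ifs at hinter ⊢ <;> simp_all <;> omega

lemma CutCond.one_le_rootedCut (h : CutCond A R₁ R₂) {U : Finset V} (hU : U.Nonempty) :
    1 ≤ rootedCut A R₂ U := by
  have := h U hU
  unfold rootedCut
  split_ifs at this ⊢ <;> omega

lemma CutCond.rootedCut_inter_eq_one (h : CutCond A R₁ R₂) {U U' : Finset V}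
    (hU : rootedCut A R₂ U = 1) (hU' : rootedCut A R₂ U' = 1) (hI : (U ∩ U').Nonempty) :
    rootedCut A R₂ (U ∩ U') = 1 := by
  have := rootedCut_inter_add_rootedCut_union_le R₂ U U' (A := A)
  have := h.one_le_rootedCut hI
  have := h.one_le_rootedCut (U := U ∪ U') (hI.mono (inter_subset_left.trans subset_union_left))
  omega

/-- Otherwise `M \ R₁` would be entered only by arcs entering `M`, too few for `CutCond`. -/
lemma CutCond.exists_arc_of_rootedCut_eq_one (h : CutCond A R₁ R₂) {M : Finset V}
    (hM : rootedCut A R₂ M = 1) (hMR : (M \ R₁).Nonempty) :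
    ∃ a ∈ A, a.1 ∈ M ∧ a.1 ∈ R₁ ∧ a.2 ∈ M ∧ a.2 ∉ R₁ := by
  by_contra! hno
  have hle : cutIn A (M \ R₁) ≤ cutIn A M := by
    refine card_le_card (monotone_filter_right _ fun a ha h' => ?_)
    simp only [mem_sdiff, not_and, not_not] at h' ⊢
    exact ⟨h'.1.1, fun h₁ => h'.1.2 (hno a ha h₁ (h'.2 h₁) h'.1.1)⟩
  have hcut := h _ hMR
  rw [if_pos disjoint_sdiff] at hcut
  unfold rootedCut at hM
  by_cases hd : Disjoint R₂ M
  · rw [if_pos (hd.mono_right sdiff_subset)] at hcut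
    rw [if_pos hd] at hM
    omega
  · rw [if_neg hd] at hM
    omega

lemma InDegCond.erase (h : InDegCond A R₁ R₂) {a : V × V} (ha : a ∈ A) (h₂ : a.2 ∉ R₁) :
    InDegCond (A.erase a) (insert a.2 R₁) R₂ := by
  intro v
  have hv := h v
  have herase := card_filter_erase_add (fun b => b.2 = v) ha
  by_cases hav : a.2 = v
  · subst hav
    simp only [h₂, mem_insert_self, if_true, if_false] at hv herase ⊢
    rw [indeg] at hv ⊢
    omega
  · have hmem : v ∈ insert a.2 R₁ ↔ v ∈ R₁ := by simp [Ne.symm hav]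
    simp only [hav, if_false, add_zero] at herase
    simpa only [indeg, herase, hmem] using hv

/-- Sets entered by `a` are not tight: uncrossing with `M` would give a smaller tight set. -/
lemma CutCond.erase (h : CutCond A R₁ R₂) {M : Finset V} (hM : rootedCut A R₂ M = 1)
    (hmin : ∀ U, rootedCut A R₂ U = 1 → (U \ R₁).Nonempty → #M ≤ #U)
    {a : V × V} (ha : a ∈ A) (ha₁ : a.1 ∈ M) (ha₂ : a.2 ∈ M) (ha₂R : a.2 ∉ R₁) :
    CutCond (A.erase a) (insert a.2 R₁) R₂ := by
  intro U hU
  have herase := card_filter_erase_add (fun b => b.2 ∈ U ∧ b.1 ∉ U) ha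
  have hold := h U hU
  rw [← cutIn, ← cutIn] at herase
  by_cases henter : a.2 ∈ U ∧ a.1 ∉ U
  · have hnot : rootedCut A R₂ U ≠ 1 := fun hU₁ => by
      have hUM := h.rootedCut_inter_eq_one hU₁ hM ⟨a.2, mem_inter.2 ⟨henter.1, ha₂⟩⟩
      have hsub : U ∩ M = M := eq_of_subset_of_card_le inter_subset_right
        (hmin _ hUM ⟨a.2, by simp [henter.1, ha₂, ha₂R]⟩)
      exact henter.2 (mem_of_mem_inter_left (hsub.symm ▸ ha₁))
    have hge := h.one_le_rootedCut hU
    have hmeet : ¬ Disjoint (insert a.2 R₁) U :=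
      not_disjoint_iff.2 ⟨a.2, mem_insert_self _ _, henter.1⟩
    unfold rootedCut at hnot hge
    rw [if_pos henter] at herase
    rw [if_neg hmeet]
    split_ifs at hnot hge ⊢ <;> omega
  · have hmono : Disjoint (insert a.2 R₁) U → Disjoint R₁ U :=
      fun hd => hd.mono_left (subset_insert _ _)
    rw [if_neg henter, add_zero] at herase
    rw [herase]
    refine le_trans (Nat.add_le_add_right ?_ _) hold
    split_ifs <;> simp_all

lemma exists_erase_of_cond (hdeg : InDegCond A R₁ R₂) (hcut : CutCond A R₁ R₂) {y : V}
    (hy : y ∉ R₁) :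
    ∃ a ∈ A, a.1 ∈ R₁ ∧ a.2 ∉ R₁ ∧
      InDegCond (A.erase a) (insert a.2 R₁) R₂ ∧ CutCond (A.erase a) (insert a.2 R₁) R₂ := by
  have huniv : rootedCut A R₂ univ = 1 := by
    have hcl : InClosed A univ := fun a _ _ => mem_univ a.1
    simp [rootedCut, cutIn_eq_zero_iff.2 hcl,
      (hcut.not_disjoint_of_inClosed ⟨y, mem_univ y⟩ hcl).2]
  obtain ⟨M, hM, hmin⟩ := exists_min_image
    (univ.filter fun U => rootedCut A R₂ U = 1 ∧ (U \ R₁).Nonempty) card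
    ⟨univ, mem_filter.2 ⟨mem_univ _, huniv, y, by simp [hy]⟩⟩
  simp only [mem_filter, mem_univ, true_and, and_imp] at hM hmin
  obtain ⟨a, ha, ha₁M, ha₁, ha₂M, ha₂⟩ := hcut.exists_arc_of_rootedCut_eq_one hM.1 hM.2
  exact ⟨a, ha, ha₁, ha₂, hdeg.erase ha ha₂, hcut.erase hM.1 hmin ha ha₁M ha₂M ha₂⟩

lemma HasBranchingPartition.of_erase {a : V × V}
    (h : HasBranchingPartition (A.erase a) (insert a.2 R₁) R₂) (ha : a ∈ A) (ha₁ : a.1 ∈ R₁)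
    (ha₂ : a.2 ∉ R₁) : HasBranchingPartition A R₁ R₂ := by
  obtain ⟨B₁, B₂, hb₁, hb₂, hun, hdj, hr₁, hr₂⟩ := h
  have haB₂ : a ∉ B₂ := fun h => notMem_erase a A (hb₂.1 h)
  refine ⟨insert a B₁, B₂, (hb₁.mono (erase_subset a A)).insert ha ?_ ?_ ?_,
    hb₂.mono (erase_subset a A), ?_, disjoint_insert_left.2 ⟨haB₂, hdj⟩, ?_, hr₂⟩
  · exact hr₁ ▸ mem_insert_of_mem ha₁
  · exact hr₁ ▸ mem_insert_self _ _
  · exact fun h => ha₂ (h ▸ ha₁)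
  · rw [insert_union, hun, insert_erase ha]
  · rw [rootSet_insert, hr₁, erase_insert ha₂]

lemma hasBranchingPartition_empty (h : InDegCond ∅ R₁ R₂) : HasBranchingPartition ∅ R₁ R₂ := by
  have hR : R₁ = univ ∧ R₂ = univ := by
    simp only [eq_univ_iff_forall, ← forall_and]
    intro v
    have := h v
    simp only [indeg, filter_empty, card_empty, zero_add] at this
    split_ifs at this <;> simp_all
  have hbr : IsBranching ∅ (∅ : Finset (V × V)) :=
    ⟨subset_rfl, by simp, fun ⟨_, _, hf⟩ => by simpa using hf 0⟩
  have hroot : rootSet (∅ : Finset (V × V)) = univ := by simp [rootSet]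
  exact ⟨∅, ∅, hbr, hbr, union_empty _, disjoint_empty_left _, hroot.trans hR.1.symm,
    hroot.trans hR.2.symm⟩

/-- The sufficiency half of Edmonds' branching theorem for two branchings, following Lovász. -/
theorem hasBranchingPartition_of_cond (hdeg : InDegCond A R₁ R₂) (hcut : CutCond A R₁ R₂) :
    HasBranchingPartition A R₁ R₂ := by
  induction hn : #A using Nat.strong_induction_on generalizing A R₁ R₂ with
  | _ n ih =>
  subst hn
  rcases A.eq_empty_or_nonempty with rfl | ⟨a₀, ha₀⟩
  · exact hasBranchingPartition_empty hdeg
  have step {R R' : Finset V} (hdeg : InDegCond A R R') (hcut : CutCond A R R')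
      (hR : a₀.2 ∉ R) : HasBranchingPartition A R R' := by
    obtain ⟨a, ha, ha₁, ha₂, hdeg', hcut'⟩ := exists_erase_of_cond hdeg hcut hR
    exact (ih _ (card_erase_lt_of_mem ha) hdeg' hcut' rfl).of_erase ha ha₁ ha₂
  by_cases h₁ : a₀.2 ∈ R₁
  · have h₂ : a₀.2 ∉ R₂ := fun h₂ => by
      have hdeg₀ := hdeg a₀.2
      have hpos : 0 < indeg A a₀.2 := card_pos.2 ⟨a₀, mem_filter.2 ⟨ha₀, rfl⟩⟩
      simp only [h₁, h₂, if_true] at hdeg₀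
      omega
    exact (step hdeg.symm hcut.symm h₂).symm
  · exact step hdeg hcut h₁

end Sufficiency

section Exchange

variable {A : Finset (V × V)} {R₁ R₂ : Finset V} {s t : V}

lemma CutCond.of_inClosed (h : CutCond A R₁ R₂) {R₁' R₂' : Finset V}
    (hsub : R₁ ∪ R₂ ⊆ R₁' ∪ R₂')
    (hcl : ∀ U : Finset V, U.Nonempty → InClosed A U → ¬ Disjoint R₁' U ∧ ¬ Disjoint R₂' U) :
    CutCond A R₁' R₂' := by
  intro U hU
  by_cases hc : InClosed A U
  · obtain ⟨h₁, h₂⟩ := hcl U hU hc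
    simp [h₁, h₂]
  have hpos : 1 ≤ cutIn A U := Nat.one_le_iff_ne_zero.2 (mt cutIn_eq_zero_iff.1 hc)
  by_cases hd : Disjoint R₁' U ∧ Disjoint R₂' U
  · have hold := (disjoint_union_left.2 hd).mono_left hsub
    rw [disjoint_union_left] at hold
    simpa [hd.1, hd.2, hold.1, hold.2] using h U hU
  · rw [not_and_or] at hd
    rcases hd with hd | hd <;> simp only [hd, if_false] <;> split_ifs <;> omega

lemma InDegCond.move (h : InDegCond A R₁ R₂) (hs₁ : s ∈ R₁) (hs₂ : s ∉ R₂) :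
    InDegCond A (R₁ \ {s}) (R₂ ∪ {s}) := by
  intro v
  have hv := h v
  by_cases hvs : v = s
  · subst hvs
    simp_all
  · simpa [hvs] using hv

lemma InDegCond.swap (h : InDegCond A R₁ R₂) (hs₁ : s ∈ R₁) (hs₂ : s ∉ R₂) (ht₁ : t ∉ R₁)
    (ht₂ : t ∈ R₂) : InDegCond A (R₁ \ {s} ∪ {t}) ((R₂ ∪ {s}) \ {t}) := by
  intro v
  have hv := h v
  have hst : s ≠ t := fun h => ht₁ (h ▸ hs₁)
  by_cases hvs : v = s
  · subst hvs
    simp_all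
  by_cases hvt : v = t
  · subst hvt
    simp_all
  · simpa [hvs, hvt] using hv

lemma CutCond.move (h : CutCond A R₁ R₂) {r : V} (hr₁ : r ∈ R₁) (hrs : r ≠ s)
    (hr : r ∈ ancestors A s) : CutCond A (R₁ \ {s}) (R₂ ∪ {s}) := by
  refine h.of_inClosed (fun x hx => by by_cases hxs : x = s <;> simp_all) fun U hU hcl => ?_
  obtain ⟨h₁, h₂⟩ := h.not_disjoint_of_inClosed hU hcl
  refine ⟨?_, fun hd => h₂ (hd.mono_left subset_union_left)⟩
  obtain ⟨x, hx₁, hxU⟩ := not_disjoint_iff.1 h₁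
  rw [not_disjoint_iff]
  by_cases hxs : x = s
  · subst hxs
    exact ⟨r, by simp [hr₁, hrs], ancestors_subset hcl hxU hr⟩
  · exact ⟨x, by simp [hx₁, hxs], hxU⟩

lemma CutCond.swap (h : CutCond A R₁ R₂) (hst : s ≠ t) (ht : t ∈ ancestors A s)
    (hR₁ : ∀ r ∈ R₁, r ∈ ancestors A s → r = s) :
    CutCond A (R₁ \ {s} ∪ {t}) ((R₂ ∪ {s}) \ {t}) := by
  refine h.of_inClosed (fun x hx => ?_) fun U hU hcl => ?_
  · by_cases hxs : x = s <;> by_cases hxt : x = t <;> simp_all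
  obtain ⟨h₁, h₂⟩ := h.not_disjoint_of_inClosed hU hcl
  obtain ⟨x, hx₁, hxU⟩ := not_disjoint_iff.1 h₁
  obtain ⟨y, hy₂, hyU⟩ := not_disjoint_iff.1 h₂
  simp only [not_disjoint_iff]
  constructor
  · by_cases hxs : x = s
    · subst hxs
      exact ⟨t, by simp, ancestors_subset hcl hxU ht⟩
    · exact ⟨x, by simp [hx₁, hxs], hxU⟩
  · by_cases hyt : y = t
    · subst hyt
      -- the ancestors of `t` contain a root of `R₁`, necessarily `s`
      obtain ⟨z, hz₁, hz⟩ := not_disjoint_iff.1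
        (h.not_disjoint_of_inClosed ⟨y, mem_ancestors_self⟩ inClosed_ancestors).1
      obtain rfl := hR₁ z hz₁ (ancestors_subset inClosed_ancestors ht hz)
      exact ⟨z, by simp [hst], ancestors_subset hcl hyU hz⟩
    · exact ⟨y, by simp [hy₂, hyt], hyU⟩

end Exchange

theorem branching_root_exchange
    (A B₁ B₂ : Finset (V × V)) (s : V)
    (h₁ : IsBranching A B₁) (h₂ : IsBranching A B₂)
    (hpart : B₁ ∪ B₂ = A) (hdisj : Disjoint B₁ B₂)
    (hs : s ∈ rootSet B₁ \ rootSet B₂) :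
    ∃ B₁' B₂' : Finset (V × V),
      IsBranching A B₁' ∧ IsBranching A B₂' ∧ B₁' ∪ B₂' = A ∧ Disjoint B₁' B₂' ∧
      ((rootSet B₁' = rootSet B₁ \ {s} ∧ rootSet B₂' = rootSet B₂ ∪ {s}) ∨
        ∃ t ∈ rootSet B₂ \ rootSet B₁,
          rootSet B₁' = (rootSet B₁ \ {s}) ∪ {t} ∧
          rootSet B₂' = (rootSet B₂ ∪ {s}) \ {t}) := by
  obtain ⟨hs₁, hs₂⟩ := mem_sdiff.1 hs
  have hpartition : HasBranchingPartition A (rootSet B₁) (rootSet B₂) :=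
    ⟨B₁, B₂, h₁, h₂, hpart, hdisj, rfl, rfl⟩
  have hdeg := hpartition.inDegCond
  have hcut := hpartition.cutCond
  by_cases hmove : ∃ r ∈ rootSet B₁, r ≠ s ∧ r ∈ ancestors A s
  · obtain ⟨r, hr₁, hrs, hr⟩ := hmove
    obtain ⟨B₁', B₂', hb₁, hb₂, hun, hdj, hr₁', hr₂'⟩ :=
      hasBranchingPartition_of_cond (hdeg.move hs₁ hs₂) (hcut.move hr₁ hrs hr)
    exact ⟨B₁', B₂', hb₁, hb₂, hun, hdj, Or.inl ⟨hr₁', hr₂'⟩⟩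
  · have hR₁ : ∀ r ∈ rootSet B₁, r ∈ ancestors A s → r = s := fun r hr hrs =>
      not_not.1 fun hne => hmove ⟨r, hr, hne, hrs⟩
    obtain ⟨t, ht₂, ht⟩ := not_disjoint_iff.1
      (hcut.not_disjoint_of_inClosed ⟨s, mem_ancestors_self⟩ inClosed_ancestors).2
    have hst : s ≠ t := fun h => hs₂ (h ▸ ht₂)
    have ht₁ : t ∉ rootSet B₁ := fun h => hst (hR₁ t h ht).symm
    obtain ⟨B₁', B₂', hb₁, hb₂, hun, hdj, hr₁', hr₂'⟩ :=
      hasBranchingPartition_of_cond (hdeg.swap hs₁ hs₂ ht₁ ht₂) (hcut.swap hst ht hR₁)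
    exact ⟨B₁', B₂', hb₁, hb₂, hun, hdj, Or.inr ⟨t, mem_sdiff.2 ⟨ht₂, ht₁⟩, hr₁', hr₂'⟩⟩
end

section
/- Let D=(V,A) be a digraph with branchings B₁,B₂ partitioning A, and let R₁', R₂' ⊆ V satisfy R₁' ∪ R₂' = R(B₁) ∪ R(B₂) and R₁' ∩ R₂' = R(B₁) ∩ R(B₂). Then A can be partitioned into branchings B₁', B₂' with R(B₁')=R₁' and R(B₂')=R₂' if and only if every source component K of D satisfies K ∩ R₁' ≠ ∅ and K ∩ R₂' ≠ ∅. -/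
open scoped Classical
open Finset

variable {V : Type*} [Fintype V] [DecidableEq V]

set_option linter.unusedSectionVars false
set_option linter.unusedVariables false
set_option maxHeartbeats 1000000

section Aux

lemma mem_rootSet_iff {B : Finset (V × V)} {v : V} :
    v ∈ rootSet B ↔ ∀ a ∈ B, a.2 ≠ v := by simp [rootSet]

lemma notMem_rootSet_iff {B : Finset (V × V)} {v : V} :
    v ∉ rootSet B ↔ ∃ a ∈ B, a.2 = v := by simp [rootSet]

/-- A rank function certifies acyclicity. -/
lemma noCycle_of_rank {B : Finset (V × V)} (φ : V → ℕ)
    (h : ∀ a ∈ B, φ a.1 < φ a.2) : ¬ HasCycle B := by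
  rintro ⟨n, f, hf⟩
  obtain ⟨i₀, -, hmax⟩ :=
    Finset.exists_max_image (univ : Finset (Fin (n + 1))) (fun i => φ (f i)) ⟨0, mem_univ 0⟩
  have h1 : φ (f i₀) < φ (f (i₀ + 1)) := h _ (hf i₀)
  have h2 : φ (f (i₀ + 1)) ≤ φ (f i₀) := hmax _ (mem_univ _)
  omega

lemma hasCycle_aux {B : Finset (V × V)} {seq : ℕ → V}
    (harc : ∀ n, (seq (n + 1), seq n) ∈ B) {i j : ℕ} (hij : i < j)
    (heq : seq i = seq j) : HasCycle B := by
  set m := j - i - 1 with hm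
  refine ⟨m, fun t => seq (j - t.val), fun t => ?_⟩
  by_cases hlast : t = Fin.last m
  · have h1 : (t + 1 : Fin (m + 1)).val = 0 := by
      subst hlast; simp
    have h2 : t.val = m := by rw [hlast]; rfl
    have h3 : j - m = i + 1 := by omega
    simp only [h1, h2, h3, Nat.sub_zero]
    rw [← heq]
    exact harc i
  · have hlt : t.val < m := Fin.val_lt_last hlast
    have h1 : (t + 1 : Fin (m + 1)).val = t.val + 1 := by
      have : t < Fin.last m := by
        rcases Fin.lt_or_eq_of_le (Fin.le_last t) with h | h
        · exact h
        · exact absurd h hlast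
      exact Fin.val_add_one_of_lt this
    simp only [h1]
    have h2 : j - t.val = (j - (t.val + 1)) + 1 := by omega
    rw [h2]
    exact harc _

/-- If every vertex of a nonempty set `K` has an in-arc of `B` whose tail
lies in `K`, then `B` has a cycle. -/
lemma hasCycle_of_selfmap {B : Finset (V × V)} {K : Set V} (v₀ : V) (hv₀ : v₀ ∈ K)
    (h : ∀ u ∈ K, ∃ w ∈ K, (w, u) ∈ B) : HasCycle B := by
  classical
  have hg : ∀ u : V, ∃ w, u ∈ K → (w ∈ K ∧ (w, u) ∈ B) := by
    intro u
    by_cases hu : u ∈ K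
    · obtain ⟨w, hw, hwB⟩ := h u hu
      exact ⟨w, fun _ => ⟨hw, hwB⟩⟩
    · exact ⟨v₀, fun hu' => absurd hu' hu⟩
  choose g hgspec using hg
  let seq : ℕ → V := fun n => Nat.rec v₀ (fun _ x => g x) n
  have hseq_succ : ∀ n, seq (n + 1) = g (seq n) := fun n => rfl
  have hmem : ∀ n, seq n ∈ K := by
    intro n
    induction n with
    | zero => exact hv₀
    | succ n ih => rw [hseq_succ]; exact (hgspec _ ih).1
  have harc : ∀ n, (seq (n + 1), seq n) ∈ B := by
    intro n
    rw [hseq_succ]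
    exact (hgspec _ (hmem n)).2
  obtain ⟨i, j, hne, heq⟩ := Finite.exists_ne_map_eq_of_infinite seq
  rcases hne.lt_or_gt with hij | hij
  · exact hasCycle_aux harc hij heq
  · exact hasCycle_aux harc hij heq.symm

/-- Necessity: the root set of any branching in `A` meets every source component of `A`. -/
lemma rootSet_meets_sourceComponent {A B' : Finset (V × V)} (hb : IsBranching A B')
    {K : Set V} (hK : IsSourceComponent A K) :
    ∃ u ∈ rootSet B', u ∈ K := by
  obtain ⟨⟨v₀, hKeq⟩, hclosed⟩ := hK
  have hv₀ : v₀ ∈ K := by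
    rw [hKeq]
    exact ⟨Relation.ReflTransGen.refl, Relation.ReflTransGen.refl⟩
  by_contra hcon
  push_neg at hcon
  have h : ∀ u ∈ K, ∃ w ∈ K, (w, u) ∈ B' := by
    intro u hu
    have hnr : u ∉ rootSet B' := fun hr => hcon u hr hu
    rw [rootSet, mem_filter] at hnr
    push_neg at hnr
    obtain ⟨a, haB, ha2⟩ := hnr (mem_univ u)
    refine ⟨a.1, ?_, ?_⟩
    · exact hclosed a (hb.1 haB) (by rw [ha2]; exact hu)
    · have : a = (a.1, u) := by
        rw [← ha2]
      rwa [this] at haB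
  exact hb.2.2 (hasCycle_of_selfmap v₀ hv₀ h)

/-- BFS construction: if every vertex is reachable from `R`, there is a branching
contained in `A` with root set exactly `R`. -/
lemma exists_branching_rooted (A : Finset (V × V)) (R : Finset V)
    (hreach : ∀ v : V, v ∉ R → ∃ r ∈ R, Reaches A r v) :
    ∃ B : Finset (V × V), B ⊆ A ∧ (∀ v, (B.filter (fun a => a.2 = v)).card ≤ 1) ∧
      ¬ HasCycle B ∧ rootSet B = R := by
  classical
  let step : Finset V → Finset V :=
    fun S' => S' ∪ (A.filter (fun a => a.1 ∈ S')).image Prod.snd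
  let S : ℕ → Finset V := fun n => step^[n] R
  have hS0 : S 0 = R := rfl
  have hSsucc : ∀ n, S (n + 1) = S n ∪ (A.filter (fun a => a.1 ∈ S n)).image Prod.snd := by
    intro n
    show step^[n + 1] R = _
    rw [Function.iterate_succ_apply']
  have hSmono : ∀ n, S n ⊆ S (n + 1) := fun n => by
    rw [hSsucc]; exact subset_union_left
  have hreachS : ∀ r v, Reaches A r v → r ∈ R → ∃ n, v ∈ S n := by
    intro r v hrv
    induction hrv with
    | refl => intro hr; exact ⟨0, hr⟩
    | tail hwc hac ih =>
      intro hr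
      obtain ⟨n, hn⟩ := ih hr
      refine ⟨n + 1, ?_⟩
      rw [hSsucc]
      refine mem_union_right _ ?_
      exact mem_image.mpr ⟨_, mem_filter.mpr ⟨hac, hn⟩, rfl⟩
  have hex : ∀ v : V, v ∉ R → ∃ n, v ∈ S n := by
    intro v hv
    obtain ⟨r, hr, hrv⟩ := hreach v hv
    exact hreachS r v hrv hr
  let N : V → ℕ := fun v => if h : v ∉ R then Nat.find (hex v h) else 0
  have harc : ∀ v : V, ∃ a : V × V, v ∉ R →
      a ∈ A ∧ a.2 = v ∧ N a.1 < N v := by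
    intro v
    by_cases hv : v ∉ R
    · have hNv : N v = Nat.find (hex v hv) := by simp [N, hv]
      have hvS : v ∈ S (Nat.find (hex v hv)) := Nat.find_spec (hex v hv)
      have hn0 : Nat.find (hex v hv) ≠ 0 := by
        intro h0
        rw [h0, hS0] at hvS
        exact hv hvS
      obtain ⟨m, hm⟩ := Nat.exists_eq_succ_of_ne_zero hn0
      rw [hm, hSsucc] at hvS
      rcases mem_union.mp hvS with h1 | h1
      · exfalso
        have := Nat.find_min (hex v hv) (by omega : m < Nat.find (hex v hv)) h1
        exact this
      · obtain ⟨a, ha, ha2⟩ := mem_image.mp h1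
        rw [mem_filter] at ha
        refine ⟨a, fun _ => ⟨ha.1, ha2, ?_⟩⟩
        have htail : N a.1 ≤ m := by
          by_cases ht : a.1 ∉ R
          · simp only [N, dif_pos ht]
            exact Nat.find_le ha.2
          · have h' : a.1 ∈ R := not_not.mp ht
            simp [N, h']
        omega
    · exact ⟨(v, v), fun h => absurd h (by simpa using hv)⟩
  choose arcF harcF using harc
  refine ⟨(univ \ R).image arcF, ?_, ?_, ?_, ?_⟩
  · intro a ha
    obtain ⟨v, hv, rfl⟩ := mem_image.mp ha
    rw [mem_sdiff] at hv
    exact (harcF v hv.2).1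
  · intro v
    rw [card_le_one]
    intro a ha b hb
    obtain ⟨x, hx, rfl⟩ := mem_image.mp (mem_filter.mp ha).1
    obtain ⟨y, hy, rfl⟩ := mem_image.mp (mem_filter.mp hb).1
    rw [mem_sdiff] at hx hy
    have hxv : (arcF x).2 = v := (mem_filter.mp ha).2
    have hyv : (arcF y).2 = v := (mem_filter.mp hb).2
    have hx2 : (arcF x).2 = x := (harcF x hx.2).2.1
    have hy2 : (arcF y).2 = y := (harcF y hy.2).2.1
    rw [hx2] at hxv; rw [hy2] at hyv
    rw [hxv, hyv]
  · refine noCycle_of_rank N ?_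
    intro a ha
    obtain ⟨v, hv, rfl⟩ := mem_image.mp ha
    rw [mem_sdiff] at hv
    have h := harcF v hv.2
    rw [h.2.1]
    exact h.2.2
  · ext v
    rw [mem_rootSet_iff]
    constructor
    · intro hroot
      by_contra hv
      have hmem : arcF v ∈ (univ \ R).image arcF :=
        mem_image.mpr ⟨v, mem_sdiff.mpr ⟨mem_univ v, hv⟩, rfl⟩
      exact hroot _ hmem ((harcF v hv).2.1)
    · intro hv a ha
      obtain ⟨x, hx, rfl⟩ := mem_image.mp ha
      rw [mem_sdiff] at hx
      rw [(harcF x hx.2).2.1]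
      intro hxv
      exact hx.2 (hxv ▸ hv)

end Aux

section CutFramework

noncomputable def enterArcs (A : Finset (V × V)) (U : Finset V) : Finset (V × V) :=
  A.filter (fun a => a.2 ∈ U ∧ a.1 ∉ U)

noncomputable def reqq (R₁ R₂ U : Finset V) : ℕ :=
  (if (U ∩ R₁).Nonempty then 0 else 1) + (if (U ∩ R₂).Nonempty then 0 else 1)

def Cut (A : Finset (V × V)) (R₁ R₂ : Finset V) : Prop :=
  ∀ U : Finset V, U.Nonempty → reqq R₁ R₂ U ≤ (enterArcs A U).card

def Threat (A : Finset (V × V)) (R₁ R₂ : Finset V) (a : V × V) (U : Finset V) : Prop :=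
  a.2 ∈ U ∧ a.1 ∉ U ∧ (U ∩ R₁).Nonempty ∧ U ∩ R₂ = ∅ ∧ enterArcs A U = {a}

lemma enter_submod (A : Finset (V × V)) (U W : Finset V) :
    (enterArcs A (U ∩ W)).card + (enterArcs A (U ∪ W)).card ≤
      (enterArcs A U).card + (enterArcs A W).card := by
  classical
  simp only [enterArcs, card_filter]
  rw [← Finset.sum_add_distrib, ← Finset.sum_add_distrib]
  apply Finset.sum_le_sum
  intro a _
  by_cases h1 : a.2 ∈ U <;> by_cases h2 : a.2 ∈ W <;>
    by_cases h3 : a.1 ∈ U <;> by_cases h4 : a.1 ∈ W <;>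
    simp [mem_inter, mem_union, h1, h2, h3, h4]

lemma enterArcs_erase (A : Finset (V × V)) (a : V × V) (U : Finset V) :
    enterArcs (A.erase a) U = (enterArcs A U).erase a := by
  ext b
  simp only [enterArcs, mem_filter, mem_erase]
  tauto

lemma safe_of_no_threat {A : Finset (V × V)} {R₁ R₂ : Finset V} (hcut : Cut A R₁ R₂)
    {a : V × V} (ha : a ∈ A) (h2 : a.2 ∉ R₁)
    (hnt : ∀ U, ¬ Threat A R₁ R₂ a U) :
    Cut (A.erase a) (insert a.2 R₁) R₂ := by
  intro U hU
  have hbase := hcut U hU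
  by_cases henter : a.2 ∈ U ∧ a.1 ∉ U
  · have hmem : a ∈ enterArcs A U := mem_filter.mpr ⟨ha, henter⟩
    have hcard : (enterArcs (A.erase a) U).card + 1 = (enterArcs A U).card := by
      rw [enterArcs_erase]
      exact card_erase_add_one hmem
    have hfirst : (U ∩ insert a.2 R₁).Nonempty :=
      ⟨a.2, mem_inter.mpr ⟨henter.1, mem_insert_self _ _⟩⟩
    by_cases hR1 : (U ∩ R₁).Nonempty
    · by_cases hR2 : (U ∩ R₂).Nonempty
      · simp [reqq, hfirst, hR2]
      · have hR2' : U ∩ R₂ = ∅ := not_nonempty_iff_eq_empty.mp hR2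
        have hge2 : 2 ≤ (enterArcs A U).card := by
          rcases Nat.lt_or_ge (enterArcs A U).card 2 with h | h
          · exfalso
            have hpos : 1 ≤ (enterArcs A U).card := card_pos.mpr ⟨a, hmem⟩
            have h1' : (enterArcs A U).card = 1 := by omega
            have hsing : enterArcs A U = {a} := by
              rw [card_eq_one] at h1'
              obtain ⟨x, hx⟩ := h1'
              rw [hx] at hmem ⊢
              rw [mem_singleton] at hmem
              rw [hmem]
            exact hnt U ⟨henter.1, henter.2, hR1, hR2', hsing⟩
          · exact h
        simp only [reqq]
        rw [if_pos hfirst, if_neg hR2]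
        omega
    · simp only [reqq] at hbase ⊢
      rw [if_pos hfirst]
      rw [if_neg hR1] at hbase
      by_cases hR2 : (U ∩ R₂).Nonempty
      · rw [if_pos hR2] at hbase ⊢; omega
      · rw [if_neg hR2] at hbase ⊢; omega
  · have hmem : a ∉ enterArcs A U := by
      intro hmem'
      exact henter (mem_filter.mp hmem').2
    have hcard : enterArcs (A.erase a) U = enterArcs A U := by
      rw [enterArcs_erase, erase_eq_of_notMem hmem]
    rw [hcard]
    refine le_trans ?_ hbase
    simp only [reqq]
    have hmono : (U ∩ R₁).Nonempty → (U ∩ insert a.2 R₁).Nonempty := by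
      rintro ⟨x, hx⟩
      exact ⟨x, mem_inter.mpr ⟨(mem_inter.mp hx).1, mem_insert_of_mem (mem_inter.mp hx).2⟩⟩
    by_cases hR1 : (U ∩ R₁).Nonempty
    · rw [if_pos (hmono hR1), if_pos hR1]
    · by_cases h' : (U ∩ insert a.2 R₁).Nonempty
      · rw [if_pos h', if_neg hR1]; omega
      · rw [if_neg h', if_neg hR1]

lemma exists_safe_arc {A : Finset (V × V)} {R₁ R₂ : Finset V} (hcut : Cut A R₁ R₂)
    (hne : R₁ ≠ univ) :
    ∃ a ∈ A, a.1 ∈ R₁ ∧ a.2 ∉ R₁ ∧ Cut (A.erase a) (insert a.2 R₁) R₂ := by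
  classical
  have hUV : (univ \ R₁).Nonempty := by
    rw [Finset.sdiff_nonempty]
    intro hsub
    exact hne (le_antisymm (subset_univ _) hsub)
  have hinter : (univ \ R₁) ∩ R₁ = ∅ := Finset.sdiff_inter_self _ _
  have hreq1 : 1 ≤ reqq R₁ R₂ (univ \ R₁) := by
    simp only [reqq, hinter]
    rw [if_neg (by simp)]
    omega
  have hcard1 := hcut _ hUV
  obtain ⟨a₀, ha₀⟩ : (enterArcs A (univ \ R₁)).Nonempty := card_pos.mp (by omega)
  rw [enterArcs, mem_filter] at ha₀
  have ha₀A : a₀ ∈ A := ha₀.1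
  have ha₀2 : a₀.2 ∉ R₁ := (mem_sdiff.mp ha₀.2.1).2
  have ha₀1 : a₀.1 ∈ R₁ := by
    by_contra h
    exact ha₀.2.2 (mem_sdiff.mpr ⟨mem_univ _, h⟩)
  by_contra hcon
  push_neg at hcon
  have hcon' : ∀ a ∈ A, a.1 ∈ R₁ → a.2 ∉ R₁ → ∃ U, Threat A R₁ R₂ a U := by
    intro a haA h1 h2'
    by_contra hno
    push_neg at hno
    exact (hcon a haA h1 h2') (safe_of_no_threat hcut haA h2' hno)
  set 𝒮 : Finset (Finset V) :=
    univ.filter (fun U => ∃ a ∈ A, a.1 ∈ R₁ ∧ a.2 ∉ R₁ ∧ Threat A R₁ R₂ a U) with h𝒮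
  have h𝒮ne : 𝒮.Nonempty := by
    obtain ⟨U₀, hU₀⟩ := hcon' a₀ ha₀A ha₀1 ha₀2
    exact ⟨U₀, mem_filter.mpr ⟨mem_univ _, a₀, ha₀A, ha₀1, ha₀2, hU₀⟩⟩
  obtain ⟨Us, hUsmem, hUsmin⟩ := Finset.exists_min_image 𝒮 card h𝒮ne
  obtain ⟨as, hasA, has1, has2, hthr⟩ := (mem_filter.mp hUsmem).2
  set W := Us \ R₁ with hWdef
  have hWne : W.Nonempty := ⟨as.2, mem_sdiff.mpr ⟨hthr.1, has2⟩⟩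
  have hWR1 : W ∩ R₁ = ∅ := Finset.sdiff_inter_self _ _
  have hWR2 : W ∩ R₂ = ∅ := by
    rw [eq_empty_iff_forall_notMem]
    intro x hx
    rw [mem_inter] at hx
    have : x ∈ Us ∩ R₂ := mem_inter.mpr ⟨(mem_sdiff.mp hx.1).1, hx.2⟩
    rw [hthr.2.2.2.1] at this
    exact notMem_empty _ this
  have hb : ∃ b ∈ A, b.1 ∈ Us ∩ R₁ ∧ b.2 ∈ W := by
    by_contra hnb
    push_neg at hnb
    have hsub : enterArcs A W ⊆ {as} := by
      intro c hc
      rw [enterArcs, mem_filter] at hc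
      have hc2 : c.2 ∈ W := hc.2.1
      have hc1 : c.1 ∉ W := hc.2.2
      have hc1' : c.1 ∉ Us := by
        intro hcU
        have hcR : c.1 ∈ R₁ := by
          by_contra h
          exact hc1 (mem_sdiff.mpr ⟨hcU, h⟩)
        exact hnb c hc.1 (mem_inter.mpr ⟨hcU, hcR⟩) hc2
      have hcUs : c ∈ enterArcs A Us :=
        mem_filter.mpr ⟨hc.1, (mem_sdiff.mp hc2).1, hc1'⟩
      rw [hthr.2.2.2.2] at hcUs
      exact hcUs
    have hcardW : (enterArcs A W).card ≤ 1 :=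
      le_trans (card_le_card hsub) (by simp)
    have hreqW : reqq R₁ R₂ W = 2 := by
      simp [reqq, hWR1, hWR2]
    have := hcut W hWne
    omega
  obtain ⟨b, hbA, hb1, hb2⟩ := hb
  have hb1R : b.1 ∈ R₁ := (mem_inter.mp hb1).2
  have hb1Us : b.1 ∈ Us := (mem_inter.mp hb1).1
  have hb2R : b.2 ∉ R₁ := (mem_sdiff.mp hb2).2
  have hb2Us : b.2 ∈ Us := (mem_sdiff.mp hb2).1
  obtain ⟨Ub, hTb⟩ := hcon' b hbA hb1R hb2R
  set U' := Us ∩ Ub with hU'def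
  set U'' := Us ∪ Ub with hU''def
  have hb2U' : b.2 ∈ U' := mem_inter.mpr ⟨hb2Us, hTb.1⟩
  have hb1U' : b.1 ∉ U' := fun h => hTb.2.1 (mem_inter.mp h).2
  have hU'ne : U'.Nonempty := ⟨b.2, hb2U'⟩
  have hU''ne : U''.Nonempty := ⟨b.2, mem_union_left _ hb2Us⟩
  have hsubmod := enter_submod A Us Ub
  rw [← hU'def, ← hU''def] at hsubmod
  have hcards : (enterArcs A Us).card = 1 := by rw [hthr.2.2.2.2]; simp
  have hcardb : (enterArcs A Ub).card = 1 := by rw [hTb.2.2.2.2]; simp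
  have hU''R2 : U'' ∩ R₂ = ∅ := by
    rw [hU''def, union_inter_distrib_right, hthr.2.2.2.1, hTb.2.2.2.1]
    simp
  have hU''R1 : (U'' ∩ R₁).Nonempty := by
    obtain ⟨x, hx⟩ := hthr.2.2.1
    exact ⟨x, mem_inter.mpr ⟨mem_union_left _ (mem_inter.mp hx).1, (mem_inter.mp hx).2⟩⟩
  have hreq'' : reqq R₁ R₂ U'' = 1 := by
    simp [reqq, hU''R1, hU''R2]
  have hcut'' := hcut U'' hU''ne
  have hU'R2 : U' ∩ R₂ = ∅ := by
    rw [eq_empty_iff_forall_notMem]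
    intro x hx
    rw [mem_inter] at hx
    have : x ∈ Us ∩ R₂ := mem_inter.mpr ⟨(mem_inter.mp hx.1).1, hx.2⟩
    rw [hthr.2.2.2.1] at this
    exact notMem_empty _ this
  by_cases hU'R1 : (U' ∩ R₁).Nonempty
  · have hreq' : reqq R₁ R₂ U' = 1 := by simp [reqq, hU'R1, hU'R2]
    have hcut' := hcut U' hU'ne
    have he' : (enterArcs A U').card = 1 := by omega
    have hbmem : b ∈ enterArcs A U' := mem_filter.mpr ⟨hbA, hb2U', hb1U'⟩
    have heq : enterArcs A U' = {b} := by
      rw [card_eq_one] at he'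
      obtain ⟨x, hx⟩ := he'
      rw [hx] at hbmem ⊢
      rw [mem_singleton] at hbmem
      rw [hbmem]
    have hthreat' : Threat A R₁ R₂ b U' := ⟨hb2U', hb1U', hU'R1, hU'R2, heq⟩
    have hU'mem : U' ∈ 𝒮 := mem_filter.mpr ⟨mem_univ _, b, hbA, hb1R, hb2R, hthreat'⟩
    have hlt : U'.card < Us.card := by
      apply card_lt_card
      rw [Finset.ssubset_iff_of_subset inter_subset_left]
      exact ⟨b.1, hb1Us, hb1U'⟩
    have := hUsmin U' hU'mem
    omega
  · have hreq' : reqq R₁ R₂ U' = 2 := by simp [reqq, hU'R1, hU'R2]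
    have hcut' := hcut U' hU'ne
    omega

end CutFramework

section Edmonds

lemma edmonds_base {A : Finset (V × V)} {R₂ : Finset V} (hcut : Cut A univ R₂) :
    ∃ B₂ : Finset (V × V), B₂ ⊆ A ∧ (∀ v, (B₂.filter (fun a => a.2 = v)).card ≤ 1) ∧
      ¬ HasCycle B₂ ∧ rootSet B₂ = R₂ := by
  apply exists_branching_rooted
  intro v _
  by_contra hnr
  push_neg at hnr
  set W : Finset V := univ.filter (fun w => ¬∃ r ∈ R₂, Reaches A r w) with hW
  have hvW : v ∈ W := mem_filter.mpr ⟨mem_univ _, by push_neg; exact hnr⟩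
  have hWne : W.Nonempty := ⟨v, hvW⟩
  have hent : enterArcs A W = ∅ := by
    rw [eq_empty_iff_forall_notMem]
    intro c hc
    rw [enterArcs, mem_filter] at hc
    have hc2 : c.2 ∈ W := hc.2.1
    have hc1 : c.1 ∉ W := hc.2.2
    have : ∃ r ∈ R₂, Reaches A r c.1 := by
      by_contra h
      exact hc1 (mem_filter.mpr ⟨mem_univ _, h⟩)
    obtain ⟨r, hr, hrc⟩ := this
    have hrc2 : Reaches A r c.2 := Relation.ReflTransGen.tail hrc (by simpa using hc.1)
    have := (mem_filter.mp hc2).2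
    exact this ⟨r, hr, hrc2⟩
  have hWR2 : W ∩ R₂ = ∅ := by
    rw [eq_empty_iff_forall_notMem]
    intro r hr
    rw [mem_inter] at hr
    exact (mem_filter.mp hr.1).2 ⟨r, hr.2, Relation.ReflTransGen.refl⟩
  have hfinal := hcut W hWne
  rw [hent] at hfinal
  have e1 : (W ∩ univ).Nonempty := by rwa [inter_univ]
  have e2 : ¬ (W ∩ R₂).Nonempty := by rw [hWR2]; simp
  simp only [reqq, if_pos e1, if_neg e2, card_empty] at hfinal
  omega

lemma edmonds2 (n : ℕ) :
    ∀ (A : Finset (V × V)) (R₁ R₂ : Finset V), (univ \ R₁).card ≤ n → Cut A R₁ R₂ →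
    ∃ B₁ B₂ : Finset (V × V), B₁ ⊆ A ∧ B₂ ⊆ A ∧ Disjoint B₁ B₂ ∧
      (∀ v, (B₁.filter (fun a => a.2 = v)).card ≤ 1) ∧ ¬ HasCycle B₁ ∧ rootSet B₁ = R₁ ∧
      (∀ v, (B₂.filter (fun a => a.2 = v)).card ≤ 1) ∧ ¬ HasCycle B₂ ∧ rootSet B₂ = R₂ := by
  induction n with
  | zero =>
    intro A R₁ R₂ hn hcut
    have hR₁ : R₁ = univ := by
      have h0 : (univ \ R₁).card = 0 := Nat.le_zero.mp hn
      rw [card_eq_zero, sdiff_eq_empty_iff_subset] at h0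
      exact le_antisymm (subset_univ _) h0
    subst hR₁
    obtain ⟨B₂, hB₂A, hdeg₂, hnc₂, hroot₂⟩ := edmonds_base hcut
    refine ⟨∅, B₂, empty_subset _, hB₂A, disjoint_empty_left _, ?_, ?_, ?_, hdeg₂, hnc₂, hroot₂⟩
    · intro v; simp
    · rintro ⟨n, f, hf⟩
      exact absurd (hf 0) (notMem_empty _)
    · simp [rootSet]
  | succ n ih =>
    intro A R₁ R₂ hn hcut
    by_cases hR₁ : R₁ = univ
    · subst hR₁
      obtain ⟨B₂, hB₂A, hdeg₂, hnc₂, hroot₂⟩ := edmonds_base hcut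
      refine ⟨∅, B₂, empty_subset _, hB₂A, disjoint_empty_left _, ?_, ?_, ?_, hdeg₂, hnc₂, hroot₂⟩
      · intro v; simp
      · rintro ⟨m, f, hf⟩
        exact absurd (hf 0) (notMem_empty _)
      · simp [rootSet]
    · obtain ⟨a, haA, ha1, ha2, hcut'⟩ := exists_safe_arc hcut hR₁
      have hne12 : a.1 ≠ a.2 := fun h => ha2 (h ▸ ha1)
      have hmeas : (univ \ insert a.2 R₁).card ≤ n := by
        have h1 : univ \ insert a.2 R₁ = (univ \ R₁).erase a.2 := by
          ext x
          simp only [mem_sdiff, mem_univ, true_and, mem_insert, mem_erase]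
          tauto
        have h2 : a.2 ∈ univ \ R₁ := mem_sdiff.mpr ⟨mem_univ _, ha2⟩
        rw [h1, card_erase_of_mem h2]
        omega
      obtain ⟨B₁', B₂', hB₁A, hB₂A, hdisj', hdeg₁, hnc₁, hroot₁, hdeg₂, hnc₂, hroot₂⟩ :=
        ih (A.erase a) (insert a.2 R₁) R₂ hmeas hcut'
      have ha2root : a.2 ∈ rootSet B₁' := by rw [hroot₁]; exact mem_insert_self _ _
      have ha1root : a.1 ∈ rootSet B₁' := by
        rw [hroot₁]; exact mem_insert_of_mem ha1
      have hB₁noa2 : ∀ b ∈ B₁', b.2 ≠ a.2 := mem_rootSet_iff.mp ha2root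
      have hB₁noa1 : ∀ b ∈ B₁', b.2 ≠ a.1 := mem_rootSet_iff.mp ha1root
      refine ⟨insert a B₁', B₂', ?_, ?_, ?_, ?_, ?_, ?_, hdeg₂, hnc₂, hroot₂⟩
      · intro b hb
        rcases mem_insert.mp hb with rfl | hb'
        · exact haA
        · exact mem_of_mem_erase (hB₁A hb')
      · exact hB₂A.trans (erase_subset _ _)
      · rw [disjoint_insert_left]
        refine ⟨fun h => ?_, hdisj'⟩
        exact notMem_erase a A (hB₂A h)
      · intro v
        rw [card_le_one]
        intro b hb c hc
        rw [mem_filter, mem_insert] at hb hc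
        rcases hb.1 with rfl | hb' <;> rcases hc.1 with rfl | hc'
        · rfl
        · exact absurd hc.2 (hB₁noa2 c hc' ∘ (hb.2 ▸ id))
        · exact absurd hb.2 (hB₁noa2 b hb' ∘ (hc.2 ▸ id))
        · have := hdeg₁ v
          rw [card_le_one] at this
          exact this b (mem_filter.mpr ⟨hb', hb.2⟩) c (mem_filter.mpr ⟨hc', hc.2⟩)
      · rintro ⟨m, f, hf⟩
        by_cases hcase : ∀ i, (f i, f (i + 1)) ∈ B₁'
        · exact hnc₁ ⟨m, f, hcase⟩
        · push_neg at hcase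
          obtain ⟨i, hi⟩ := hcase
          have hia : (f i, f (i + 1)) = a := by
            rcases mem_insert.mp (hf i) with h | h
            · exact h
            · exact absurd h hi
          have hfi : f i = a.1 := congrArg Prod.fst hia
          have harc := hf (i - 1)
          have hidx : (i - 1) + 1 = i := by
            exact sub_add_cancel i 1
          rw [hidx] at harc
          rcases mem_insert.mp harc with h | h
          · have : f i = a.2 := congrArg Prod.snd h
            rw [hfi] at this
            exact hne12 this
          · exact hB₁noa1 _ h hfi
      · ext v
        rw [mem_rootSet_iff]
        constructor
        · intro h
          have hv2 : v ≠ a.2 := fun hv => (h a (mem_insert_self _ _)) hv.symm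
          have : v ∈ rootSet B₁' := mem_rootSet_iff.mpr fun b hb => h b (mem_insert_of_mem hb)
          rw [hroot₁, mem_insert] at this
          rcases this with h' | h'
          · exact absurd h' hv2
          · exact h'
        · intro hv b hb
          rcases mem_insert.mp hb with rfl | hb'
          · exact fun h => ha2 (h ▸ hv)
          · have : v ∈ rootSet B₁' := by
              rw [hroot₁]
              exact mem_insert_of_mem hv
            exact mem_rootSet_iff.mp this b hb'

end Edmonds

section CutDerivation

/-- For a closed set, walking backwards stays inside. -/
lemma mem_of_reaches_closed {A : Finset (V × V)} {U : Finset V}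
    (hclosed : ∀ a ∈ A, a.2 ∈ U → a.1 ∈ U) {w x : V}
    (h : Reaches A w x) (hx : x ∈ U) : w ∈ U := by
  induction h with
  | refl => exact hx
  | tail hwc hcx ih =>
    exact ih (hclosed _ hcx hx)

/-- Every nonempty closed set contains a source component. -/
lemma exists_source_subset (A : Finset (V × V)) {U : Finset V} (hUne : U.Nonempty)
    (hclosed : ∀ a ∈ A, a.2 ∈ U → a.1 ∈ U) :
    ∃ K : Set V, IsSourceComponent A K ∧ ∀ w ∈ K, w ∈ U := by
  classical
  set RS : V → Finset V := fun v => univ.filter (fun w => Reaches A w v) with hRS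
  obtain ⟨u, huU, humin⟩ := Finset.exists_min_image U (fun v => (RS v).card) hUne
  refine ⟨{w | Reaches A w u ∧ Reaches A u w}, ⟨⟨u, rfl⟩, ?_⟩, ?_⟩
  · intro a haA haK
    obtain ⟨h2u, hu2⟩ := haK
    have hstep : Reaches A a.1 a.2 :=
      Relation.ReflTransGen.single (by simpa using haA)
    have h1u : Reaches A a.1 u := hstep.trans h2u
    refine ⟨h1u, ?_⟩
    by_contra hnr
    have hsub : RS a.1 ⊆ RS u := by
      intro w hw
      rw [hRS, mem_filter] at hw ⊢
      exact ⟨mem_univ _, hw.2.trans h1u⟩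
    have huin : u ∈ RS u := by
      rw [hRS, mem_filter]
      exact ⟨mem_univ _, Relation.ReflTransGen.refl⟩
    have hunotin : u ∉ RS a.1 := by
      rw [hRS, mem_filter]
      exact fun h => hnr h.2
    have hssub : RS a.1 ⊂ RS u := ⟨hsub, fun h => hunotin (h huin)⟩
    have hlt := card_lt_card hssub
    have ha1U : a.1 ∈ U := mem_of_reaches_closed hclosed h1u huU
    have := humin a.1 ha1U
    omega
  · intro w hwK
    exact mem_of_reaches_closed hclosed hwK.1 huU

/-- A branching has at most `|U| - 1` arcs inside any nonempty `U`. -/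
lemma branching_inside {B : Finset (V × V)}
    (hdeg : ∀ v, (B.filter (fun a => a.2 = v)).card ≤ 1) (hnc : ¬ HasCycle B)
    {U : Finset V} (hU : U.Nonempty) :
    (B.filter (fun a => a.1 ∈ U ∧ a.2 ∈ U)).card + 1 ≤ U.card := by
  classical
  set F := B.filter (fun a => a.1 ∈ U ∧ a.2 ∈ U) with hF
  have hinj : Set.InjOn Prod.snd (F : Set (V × V)) := by
    intro a ha b hb hab
    rw [Finset.mem_coe] at ha hb
    rw [hF, mem_filter] at ha hb
    have h := hdeg a.2
    rw [card_le_one] at h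
    exact h a (mem_filter.mpr ⟨ha.1, rfl⟩) b (mem_filter.mpr ⟨hb.1, hab.symm⟩)
  have hhole : ∃ u₀ ∈ U, u₀ ∉ F.image Prod.snd := by
    by_contra hcon
    push_neg at hcon
    refine hnc (hasCycle_of_selfmap hU.choose hU.choose_spec ?_)
    intro x hx
    obtain ⟨a, haF, ha2⟩ := mem_image.mp (hcon x hx)
    rw [hF, mem_filter] at haF
    refine ⟨a.1, haF.2.1, ?_⟩
    have : a = (a.1, x) := by rw [← ha2]
    rw [← this]
    exact haF.1
  obtain ⟨u₀, hu₀U, hu₀⟩ := hhole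
  have himage : F.image Prod.snd ⊆ U.erase u₀ := by
    intro x hx
    obtain ⟨a, haF, ha2⟩ := mem_image.mp hx
    rw [hF, mem_filter] at haF
    rw [mem_erase]
    exact ⟨fun h => hu₀ (h ▸ hx), ha2 ▸ haF.2.2⟩
  have h1 : F.card = (F.image Prod.snd).card := (card_image_of_injOn hinj).symm
  have h2 : (F.image Prod.snd).card ≤ (U.erase u₀).card := card_le_card himage
  have h3 : (U.erase u₀).card + 1 = U.card := card_erase_add_one hu₀U
  omega

/-- Splitting the in-arcs of `U` into inside arcs and entering arcs. -/
lemma card_head_mem_split (A : Finset (V × V)) (U : Finset V) :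
    (A.filter (fun a => a.2 ∈ U)).card =
      (A.filter (fun a => a.1 ∈ U ∧ a.2 ∈ U)).card + (enterArcs A U).card := by
  classical
  simp only [enterArcs, card_filter]
  rw [← Finset.sum_add_distrib]
  apply Finset.sum_congr rfl
  intro a _
  by_cases h1 : a.2 ∈ U <;> by_cases h2 : a.1 ∈ U <;> simp [h1, h2]

/-- Lower bound on in-arcs when every vertex of `U` has in-degree at least 2. -/
lemma card_head_mem_ge (A : Finset (V × V)) (U : Finset V)
    (h : ∀ u ∈ U, 2 ≤ (A.filter (fun a => a.2 = u)).card) :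
    2 * U.card ≤ (A.filter (fun a => a.2 ∈ U)).card := by
  classical
  have hsplit : A.filter (fun a => a.2 ∈ U) = U.biUnion (fun u => A.filter (fun a => a.2 = u)) := by
    ext a
    simp only [mem_filter, mem_biUnion]
    constructor
    · rintro ⟨ha, h2⟩; exact ⟨a.2, h2, ha, rfl⟩
    · rintro ⟨u, hu, ha, h2⟩; exact ⟨ha, h2 ▸ hu⟩
  rw [hsplit, card_biUnion]
  · calc 2 * U.card = ∑ _u ∈ U, 2 := by rw [Finset.sum_const]; ring
    _ ≤ ∑ u ∈ U, (A.filter (fun a => a.2 = u)).card := Finset.sum_le_sum h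
  · intro x _ y _ hxy
    simp only [disjoint_left, mem_filter]
    rintro a ⟨_, h1⟩ ⟨_, h2⟩
    exact hxy (h1 ▸ h2.symm ▸ rfl)

lemma branching_card {B : Finset (V × V)}
    (hdeg : ∀ v, (B.filter (fun a => a.2 = v)).card ≤ 1) :
    B.card + (rootSet B).card = Fintype.card V := by
  classical
  have hinj : Set.InjOn Prod.snd (B : Set (V × V)) := by
    intro a ha b hb hab
    rw [Finset.mem_coe] at ha hb
    have h := hdeg a.2
    rw [card_le_one] at h
    exact h a (mem_filter.mpr ⟨ha, rfl⟩) b (mem_filter.mpr ⟨hb, hab.symm⟩)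
  have himg : B.image Prod.snd = univ \ rootSet B := by
    ext v
    rw [mem_image, mem_sdiff]
    constructor
    · rintro ⟨a, ha, rfl⟩
      exact ⟨mem_univ _, notMem_rootSet_iff.mpr ⟨a, ha, rfl⟩⟩
    · rintro ⟨-, hv⟩
      obtain ⟨a, ha, h2⟩ := notMem_rootSet_iff.mp hv
      exact ⟨a, ha, h2⟩
  have h1 : B.card = (univ \ rootSet B).card := by
    rw [← himg, card_image_of_injOn hinj]
  have h2 : (univ \ rootSet B).card = univ.card - (rootSet B).card :=
    card_sdiff_of_subset (subset_univ _)
  have h3 : (rootSet B).card ≤ univ.card := card_le_card (subset_univ _)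
  rw [← Finset.card_univ]
  omega

lemma cut_of_hyp (A B₁ B₂ : Finset (V × V)) (h₁ : IsBranching A B₁) (h₂ : IsBranching A B₂)
    (hpart : B₁ ∪ B₂ = A) (hdisj : Disjoint B₁ B₂) (R₁' R₂' : Finset V)
    (hu : R₁' ∪ R₂' = rootSet B₁ ∪ rootSet B₂)
    (hsrc : ∀ K : Set V, IsSourceComponent A K →
      (∃ u ∈ R₁', u ∈ K) ∧ (∃ u ∈ R₂', u ∈ K)) :
    Cut A R₁' R₂' := by
  intro U hUne
  by_cases hent : enterArcs A U = ∅
  · have hclosed : ∀ a ∈ A, a.2 ∈ U → a.1 ∈ U := by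
      intro a ha h2
      by_contra h1
      have hmem : a ∈ enterArcs A U := mem_filter.mpr ⟨ha, h2, h1⟩
      rw [hent] at hmem
      exact notMem_empty _ hmem
    obtain ⟨K, hK, hKsub⟩ := exists_source_subset A hUne hclosed
    obtain ⟨⟨r₁, hr₁, hr₁K⟩, ⟨r₂, hr₂, hr₂K⟩⟩ := hsrc K hK
    have e1 : (U ∩ R₁').Nonempty := ⟨r₁, mem_inter.mpr ⟨hKsub _ hr₁K, hr₁⟩⟩
    have e2 : (U ∩ R₂').Nonempty := ⟨r₂, mem_inter.mpr ⟨hKsub _ hr₂K, hr₂⟩⟩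
    simp [reqq, e1, e2]
  · have hpos : 1 ≤ (enterArcs A U).card :=
      card_pos.mpr (nonempty_iff_ne_empty.mpr hent)
    by_cases e1 : (U ∩ R₁').Nonempty <;> by_cases e2 : (U ∩ R₂').Nonempty
    · simp [reqq, e1, e2]
    · simp only [reqq, if_pos e1, if_neg e2]; omega
    · simp only [reqq, if_neg e1, if_pos e2]; omega
    · have hdeg2 : ∀ u ∈ U, 2 ≤ (A.filter (fun a => a.2 = u)).card := by
        intro u hu'
        have hu1 : u ∉ R₁' := fun h => e1 ⟨u, mem_inter.mpr ⟨hu', h⟩⟩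
        have hu2 : u ∉ R₂' := fun h => e2 ⟨u, mem_inter.mpr ⟨hu', h⟩⟩
        have hroots : u ∉ rootSet B₁ ∪ rootSet B₂ := by
          rw [← hu, mem_union]
          push_neg
          exact ⟨hu1, hu2⟩
        rw [mem_union] at hroots
        push_neg at hroots
        obtain ⟨a₁, ha₁B, ha₁2⟩ := notMem_rootSet_iff.mp hroots.1
        obtain ⟨a₂, ha₂B, ha₂2⟩ := notMem_rootSet_iff.mp hroots.2
        have hne : a₁ ≠ a₂ := fun h => disjoint_left.mp hdisj ha₁B (h ▸ ha₂B)
        have hsubp : ({a₁, a₂} : Finset (V × V)) ⊆ A.filter (fun a => a.2 = u) := by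
          intro x hx
          rcases mem_insert.mp hx with rfl | hx
          · exact mem_filter.mpr ⟨hpart ▸ mem_union_left _ ha₁B, ha₁2⟩
          · rw [mem_singleton] at hx
            subst hx
            exact mem_filter.mpr ⟨hpart ▸ mem_union_right _ ha₂B, ha₂2⟩
        calc 2 = ({a₁, a₂} : Finset (V × V)).card := (card_pair hne).symm
        _ ≤ _ := card_le_card hsubp
      have hG := card_head_mem_ge A U hdeg2
      have hsplit := card_head_mem_split A U
      have hAun : A.filter (fun a => a.1 ∈ U ∧ a.2 ∈ U) =
          B₁.filter (fun a => a.1 ∈ U ∧ a.2 ∈ U) ∪ B₂.filter (fun a => a.1 ∈ U ∧ a.2 ∈ U) := by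
        rw [← hpart, filter_union]
      have hdisf : Disjoint (B₁.filter (fun a => a.1 ∈ U ∧ a.2 ∈ U))
          (B₂.filter (fun a => a.1 ∈ U ∧ a.2 ∈ U)) :=
        disjoint_filter_filter hdisj
      have hin : (A.filter (fun a => a.1 ∈ U ∧ a.2 ∈ U)).card + 2 ≤ 2 * U.card := by
        rw [hAun, card_union_of_disjoint hdisf]
        have i1 := branching_inside h₁.2.1 h₁.2.2 hUne
        have i2 := branching_inside h₂.2.1 h₂.2.2 hUne
        omega
      simp only [reqq, if_neg e1, if_neg e2]
      omega

end CutDerivation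

theorem disjoint_branchings_with_prescribed_roots_iff
    (A B₁ B₂ : Finset (V × V))
    (h₁ : IsBranching A B₁) (h₂ : IsBranching A B₂)
    (hpart : B₁ ∪ B₂ = A) (hdisj : Disjoint B₁ B₂)
    (R₁' R₂' : Finset V)
    (hu : R₁' ∪ R₂' = rootSet B₁ ∪ rootSet B₂)
    (hi : R₁' ∩ R₂' = rootSet B₁ ∩ rootSet B₂) :
    (∃ B₁' B₂' : Finset (V × V),
        IsBranching A B₁' ∧ IsBranching A B₂' ∧ B₁' ∪ B₂' = A ∧ Disjoint B₁' B₂' ∧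
        rootSet B₁' = R₁' ∧ rootSet B₂' = R₂') ↔
      ∀ K : Set V, IsSourceComponent A K →
        (∃ u ∈ R₁', u ∈ K) ∧ (∃ u ∈ R₂', u ∈ K) := by
  constructor
  · rintro ⟨B₁', B₂', hb₁, hb₂, hpart', hdisj', hr₁, hr₂⟩ K hK
    constructor
    · rw [← hr₁]
      exact rootSet_meets_sourceComponent hb₁ hK
    · rw [← hr₂]
      exact rootSet_meets_sourceComponent hb₂ hK
  · intro hsrc
    have hcut : Cut A R₁' R₂' := cut_of_hyp A B₁ B₂ h₁ h₂ hpart hdisj R₁' R₂' hu hsrc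
    obtain ⟨B₁', B₂', hB₁A, hB₂A, hdisj', hdeg₁, hnc₁, hroot₁, hdeg₂, hnc₂, hroot₂⟩ :=
      edmonds2 (univ \ R₁').card A R₁' R₂' le_rfl hcut
    have c1 := branching_card hdeg₁
    have c2 := branching_card hdeg₂
    have c3 := branching_card h₁.2.1
    have c4 := branching_card h₂.2.1
    have c5 : A.card = B₁.card + B₂.card := by
      rw [← hpart, card_union_of_disjoint hdisj]
    have c6 : R₁'.card + R₂'.card = (rootSet B₁).card + (rootSet B₂).card := by
      have d1 := Finset.card_union_add_card_inter R₁' R₂'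
      have d2 := Finset.card_union_add_card_inter (rootSet B₁) (rootSet B₂)
      rw [hu, hi] at d1
      omega
    rw [hroot₁] at c1
    rw [hroot₂] at c2
    have hcard : A.card ≤ (B₁' ∪ B₂').card := by
      rw [card_union_of_disjoint hdisj']
      omega
    have huni : B₁' ∪ B₂' = A :=
      Finset.eq_of_subset_of_card_le (union_subset hB₁A hB₂A) hcard
    exact ⟨B₁', B₂', ⟨hB₁A, hdeg₁, hnc₁⟩, ⟨hB₂A, hdeg₂, hnc₂⟩, huni, hdisj', hroot₁, hroot₂⟩
end

section
/- Let g_T: Z^T → Z ∪ {+∞} be the minimum branching weight function of a digraph D[T] with nonnegative weights, and let q ∈ Z^T. If argmin of g_T[+q] (where g_T[+q](η) = g_T(η) + Σ_v q(v)η(v)) is nonempty, then q(v) ≥ 0 for every v ∈ T; moreover q(v) = 0 whenever some minimizer η* of g_T[+q] has η*(v) ≥ 2. -/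
open scoped Classical
open Finset

variable {V : Type*} [Fintype V] [DecidableEq V]

/-- Characteristic vector of a single vertex. -/
def chi (u : V) : V → ℤ := fun v => if v = u then 1 else 0

/-- `gFun A w η`: the minimum weight of a branching `B` in `(V, A)` with
`R(B) = supp⁺(η)`, for `η ∈ ℤ₊^V`; `+∞` (i.e. `⊤`) otherwise. -/
noncomputable def gFun (A : Finset (V × V)) (w : V × V → ℤ) (η : V → ℤ) : WithTop ℤ :=
  if ∀ v : V, 0 ≤ η v then
    (A.powerset.filter (fun B => IsBranching A B ∧
        rootSet B = Finset.univ.filter (fun v => 0 < η v))).inf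
      (fun B => ((∑ a ∈ B, w a : ℤ) : WithTop ℤ))
  else ⊤

/-- The shifted function `g[+q](η) = g(η) + q·η`. -/
noncomputable def gShift (A : Finset (V × V)) (w : V × V → ℤ) (q : V → ℤ) (η : V → ℤ) :
    WithTop ℤ :=
  gFun A w η + ((∑ v : V, q v * η v : ℤ) : WithTop ℤ)

/-!
Raising `η` by one at `v` only adds `v` to the prescribed root set: deleting the arcs entering `v`
from an optimal branching gives a branching with the new root set and, as `w ≥ 0`, no larger
weight. Hence `g(η + χ_v) ≤ g(η)`, and minimality of a finite value of `g[+q]` at `η` forces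
`q(v) ≥ 0`. If `η(v) ≥ 2`, lowering `η` by one at `v` keeps it nonnegative with the same support,
so `g(η - χ_v) = g(η)` and minimality forces `q(v) ≤ 0`.
-/

omit [Fintype V] [DecidableEq V] in
lemma HasCycle.mono {B B' : Finset (V × V)} (h : B' ⊆ B) (hc : HasCycle B') : HasCycle B :=
  let ⟨n, f, hf⟩ := hc
  ⟨n, f, fun i => h (hf i)⟩

omit [Fintype V] in
lemma IsBranching.filter_snd_ne {A B : Finset (V × V)} (h : IsBranching A B) (v : V) :
    IsBranching A (B.filter (·.2 ≠ v)) := by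
  obtain ⟨hBA, hindeg, hacyc⟩ := h
  refine ⟨(filter_subset _ _).trans hBA, fun u => (card_le_card ?_).trans (hindeg u),
    fun hc => hacyc (hc.mono (filter_subset _ _))⟩
  exact filter_subset_filter _ (filter_subset _ _)

lemma rootSet_filter_snd_ne (B : Finset (V × V)) (v : V) :
    rootSet (B.filter (·.2 ≠ v)) = insert v (rootSet B) := by
  ext u
  simp only [rootSet, mem_insert, mem_filter, mem_univ, true_and]
  by_cases huv : u = v
  · simp [huv]
  · simp only [huv, false_or]
    exact ⟨fun h a ha hau => h a ⟨ha, by rwa [hau]⟩ hau, fun h a ha => h a ha.1⟩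

omit [Fintype V] in
lemma chi_nonneg (v u : V) : 0 ≤ chi v u := by
  unfold chi
  split_ifs <;> norm_num

lemma sum_mul_chi (q : V → ℤ) (v : V) : ∑ u, q u * chi v u = q v := by
  simp [chi]

lemma gFun_add_chi_le (A : Finset (V × V)) {w : V × V → ℤ} (hw : ∀ a, 0 ≤ w a) (η : V → ℤ)
    (v : V) : gFun A w (η + chi v) ≤ gFun A w η := by
  unfold gFun
  by_cases hη : ∀ u, 0 ≤ η u
  swap
  · rw [if_neg hη]
    exact le_top
  have hη' : ∀ u, 0 ≤ (η + chi v) u := fun u => add_nonneg (hη u) (chi_nonneg v u)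
  rw [if_pos hη, if_pos hη']
  refine Finset.le_inf fun B hB => ?_
  simp only [mem_filter, mem_powerset] at hB
  obtain ⟨hBA, hbr, hroot⟩ := hB
  have hroot' : rootSet (B.filter (·.2 ≠ v)) = univ.filter (fun u => 0 < (η + chi v) u) := by
    rw [rootSet_filter_snd_ne, hroot]
    ext u
    rw [mem_insert, mem_filter, mem_filter]
    simp only [mem_univ, true_and, Pi.add_apply, chi]
    by_cases huv : u = v
    · simp only [huv, if_true, true_or, true_iff]
      linarith [hη v]
    · simp [huv]
  refine inf_le_of_le (b := B.filter (·.2 ≠ v)) ?_ ?_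
  · exact mem_filter.2 ⟨mem_powerset.2 ((filter_subset _ _).trans hBA), hbr.filter_snd_ne v, hroot'⟩
  · exact_mod_cast sum_le_sum_of_subset_of_nonneg (filter_subset _ _) fun a _ _ => hw a

lemma gFun_sub_chi (A : Finset (V × V)) (w : V × V → ℤ) {η : V → ℤ} {v : V} (hv : 2 ≤ η v) :
    gFun A w (η - chi v) = gFun A w η := by
  have hnonneg : (∀ u, 0 ≤ (η - chi v) u) ↔ ∀ u, 0 ≤ η u := forall_congr' fun u => by
    by_cases huv : u = v
    · subst huv
      simp [chi]
      omega
    · simp [chi, huv]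
  have hsupp : univ.filter (fun u => 0 < (η - chi v) u) = univ.filter (fun u => 0 < η u) := by
    ext u
    by_cases huv : u = v
    · subst huv
      simp [chi]
      omega
    · simp [chi, huv]
  simp only [gFun, hnonneg, hsupp]

lemma gShift_add_chi_le (A : Finset (V × V)) {w : V × V → ℤ} (hw : ∀ a, 0 ≤ w a) (q η : V → ℤ)
    (v : V) : gShift A w q (η + chi v) ≤ gShift A w q η + q v := by
  have hdot : ∑ u, q u * (η + chi v) u = ∑ u, q u * η u + q v := by
    simp only [Pi.add_apply, mul_add, sum_add_distrib, sum_mul_chi]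
  rw [gShift, gShift, hdot, WithTop.coe_add, ← add_assoc]
  gcongr
  exact gFun_add_chi_le A hw η v

lemma gShift_sub_chi (A : Finset (V × V)) (w : V × V → ℤ) (q : V → ℤ) {η : V → ℤ} {v : V}
    (hv : 2 ≤ η v) : gShift A w q (η - chi v) = gShift A w q η + ↑(-q v) := by
  have hdot : ∑ u, q u * (η - chi v) u = ∑ u, q u * η u - q v := by
    simp only [Pi.sub_apply, mul_sub, sum_sub_distrib, sum_mul_chi]
  rw [gShift, gShift, hdot, gFun_sub_chi A w hv, add_assoc, ← WithTop.coe_add, ← sub_eq_add_neg]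

lemma WithTop.nonneg_of_le_add_coe {α : Type*} [AddCommMonoid α] [PartialOrder α]
    [IsOrderedCancelAddMonoid α] {x : WithTop α} (hx : x ≠ ⊤) {c : α} (h : x ≤ x + c) :
    0 ≤ c := by
  lift x to α using hx
  rw [← WithTop.coe_add, WithTop.coe_le_coe] at h
  exact (le_add_iff_nonneg_right x).1 h

/-- If `argmin g[+q]` is nonempty then `q ≥ 0`, and `q(v) = 0` whenever some
minimizer `η*` has `η*(v) ≥ 2`. -/
theorem gShift_argmin_nonempty_imp (A : Finset (V × V)) (w : V × V → ℤ)
    (hw : ∀ a, 0 ≤ w a) (q : V → ℤ)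
    (hmin : ∃ η : V → ℤ, gShift A w q η ≠ ⊤ ∧ ∀ ζ : V → ℤ, gShift A w q η ≤ gShift A w q ζ) :
    (∀ v : V, 0 ≤ q v) ∧
      ∀ (η : V → ℤ) (v : V),
        (gShift A w q η ≠ ⊤ ∧ ∀ ζ : V → ℤ, gShift A w q η ≤ gShift A w q ζ) →
        2 ≤ η v → q v = 0 := by
  obtain ⟨η₀, hfin₀, hmin₀⟩ := hmin
  have hq : ∀ v, 0 ≤ q v := fun v =>
    WithTop.nonneg_of_le_add_coe hfin₀ ((hmin₀ _).trans (gShift_add_chi_le A hw q η₀ v))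
  refine ⟨hq, fun η v ⟨hfin, hηmin⟩ hv => le_antisymm ?_ (hq v)⟩
  have := WithTop.nonneg_of_le_add_coe hfin ((hηmin _).trans_eq (gShift_sub_chi A w q hv))
  omega
end

section
/- Let z ∈ Z₊^{2^T\{∅}} satisfy the dual constraints Σ_{T': a∈δ⁻T'} z(T') ≤ w(a) for all arcs a ∈ A[T], and let q*(v) = Σ_{T'∋v} z(T'). Then for any branching B in D[T], the reduced weight w'(B) := Σ_{uv∈B}(w(uv) − q*(v)) satisfies w'(B) ≥ −Σ_{∅≠T'⊆T} (|T'|−1) z(T'). -/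
open scoped Classical
open Finset

variable {V : Type*} [Fintype V] [DecidableEq V]

lemma branching_inner_card {B : Finset (V × V)}
    (hdeg : ∀ v : V, (B.filter (fun a => a.2 = v)).card ≤ 1)
    (hnc : ¬ HasCycle B) (T' : Finset V) (hT : T'.Nonempty) :
    (B.filter (fun a => a.1 ∈ T' ∧ a.2 ∈ T')).card + 1 ≤ T'.card := by
  set S := B.filter (fun a => a.1 ∈ T' ∧ a.2 ∈ T') with hSdef
  have hinj : Set.InjOn Prod.snd (S : Set (V × V)) := by
    intro a ha b hb hab
    simp only [hSdef, Finset.coe_filter, Set.mem_setOf_eq] at ha hb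
    have ha' : a ∈ B.filter (fun x => x.2 = a.2) := by simp [ha.1]
    have hb' : b ∈ B.filter (fun x => x.2 = a.2) := by simp [hb.1, hab]
    exact Finset.card_le_one.mp (hdeg a.2) a ha' b hb'
  have hmaps : ∀ a ∈ S, a.2 ∈ T' := by
    intro a ha; simp only [hSdef, mem_filter] at ha; exact ha.2.2
  have hle : S.card ≤ T'.card := Finset.card_le_card_of_injOn Prod.snd hmaps hinj
  by_contra hcon
  push_neg at hcon
  have hcard : S.card = T'.card := by omega
  have himg : S.image Prod.snd = T' := by
    apply Finset.eq_of_subset_of_card_le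
    · intro v hv; obtain ⟨a, ha, rfl⟩ := Finset.mem_image.mp hv; exact hmaps a ha
    · rw [Finset.card_image_of_injOn hinj, hcard]
  -- predecessor function
  have hsur : ∀ v ∈ T', ∃ a, a ∈ S ∧ a.2 = v := by
    intro v hv; rw [← himg] at hv; simpa using Finset.mem_image.mp hv
  classical
  have hsur' : ∀ v : V, ∃ a : V × V, v ∈ T' → a ∈ S ∧ a.2 = v := by
    intro v
    by_cases hv : v ∈ T'
    · obtain ⟨a, ha⟩ := hsur v hv
      exact ⟨a, fun _ => ha⟩
    · exact ⟨(v, v), fun h => absurd h hv⟩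
  choose g' hg' using hsur'
  set g : V → V := fun v => (g' v).1 with hgdef
  have hg : ∀ v ∈ T', g v ∈ T' ∧ (g v, v) ∈ B := by
    intro v hv
    obtain ⟨haS, hav⟩ := hg' v hv
    simp only [hSdef, mem_filter] at haS
    refine ⟨haS.2.1, ?_⟩
    have : (g v, v) = g' v := by
      rw [hgdef]; exact Prod.ext rfl hav.symm
    rw [this]; exact haS.1
  have hit : ∀ n, ∀ v ∈ T', g^[n] v ∈ T' := by
    intro n
    induction n with
    | zero => intro v hv; simpa using hv
    | succ n ih =>
      intro v hv
      rw [Function.iterate_succ_apply]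
      exact ih _ (hg v hv).1
  obtain ⟨v0, hv0⟩ := hT
  obtain ⟨i, hi, j, hj, hij, heq⟩ :=
    Finset.exists_ne_map_eq_of_card_lt_of_maps_to
      (s := Finset.range (T'.card + 1)) (t := T')
      (by simp) (fun i _ => hit i v0 hv0)
  wlog hlt : i < j generalizing i j
  · exact this j hj i hi hij.symm heq.symm (by omega)
  set m : ℕ := j - i with hm
  have hm1 : 1 ≤ m := by omega
  set p : V := g^[i] v0 with hp
  have hpT : p ∈ T' := hit i v0 hv0
  have hfix : g^[m] p = p := by
    rw [hp, ← Function.iterate_add_apply]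
    have : m + i = j := by omega
    rw [this, ← heq]
  have hitp : ∀ n, g^[n] p ∈ T' := fun n => hit n p hpT
  apply hnc
  refine ⟨m - 1, fun k => g^[m - 1 - k.val] p, ?_⟩
  intro k
  show (g^[m - 1 - k.val] p, g^[m - 1 - ((k + 1 : Fin (m - 1 + 1))).val] p) ∈ B
  have hkval : k.val ≤ m - 1 := Nat.le_of_lt_succ k.isLt
  have hstep : (k + 1 : Fin (m - 1 + 1)).val = (k.val + 1) % (m - 1 + 1) := by
    simp [Fin.add_def]
  by_cases hk : k.val = m - 1
  · have : (k + 1 : Fin (m - 1 + 1)).val = 0 := by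
      rw [hstep, hk]; simp
    rw [this, hk]
    simp only [Nat.sub_self, Function.iterate_zero_apply]
    have h2 := (hg _ (hitp (m - 1))).2
    have : g (g^[m-1] p) = p := by
      rw [← Function.iterate_succ_apply' g (m-1) p]
      have hmm : (m - 1).succ = m := by omega
      rw [hmm, hfix]
    rwa [this] at h2
  · have hklt : k.val < m - 1 := lt_of_le_of_ne hkval hk
    have hv1 : (k + 1 : Fin (m - 1 + 1)).val = k.val + 1 := by
      rw [hstep]; exact Nat.mod_eq_of_lt (by omega)
    rw [hv1]
    have h2 := (hg _ (hitp (m - 1 - (k.val + 1)))).2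
    have : g (g^[m - 1 - (k.val + 1)] p) = g^[m - 1 - k.val] p := by
      rw [← Function.iterate_succ_apply' g (m - 1 - (k.val + 1)) p]
      congr 1
      omega
    rwa [this] at h2

/-- Lower bound on the reduced weight of a branching:
`w'(B) ≥ −Σ_{∅≠T'} (|T'|−1)·z(T')`. -/
theorem reduced_weight_lower_bound
    (A : Finset (V × V)) (w : V × V → ℤ) (hw : ∀ a ∈ A, 0 ≤ w a)
    (z : Finset V → ℤ) (hz : ∀ T' : Finset V, T'.Nonempty → 0 ≤ z T')
    (hcon : ∀ a ∈ A,
      ∑ T' ∈ Finset.univ.powerset.filter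
          (fun T' : Finset V => T'.Nonempty ∧ a.1 ∉ T' ∧ a.2 ∈ T'), z T' ≤ w a)
    (B : Finset (V × V)) (hB : IsBranching A B) :
    -(∑ T' ∈ Finset.univ.powerset.filter (fun T' : Finset V => T'.Nonempty),
        ((T'.card : ℤ) - 1) * z T')
      ≤ ∑ a ∈ B,
          (w a - ∑ T' ∈ Finset.univ.powerset.filter
              (fun T' : Finset V => a.2 ∈ T'), z T') := by
  classical
  obtain ⟨hBA, hdeg, hnc⟩ := hB
  set P := (Finset.univ : Finset V).powerset with hP
  have key : ∀ a ∈ B,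
      -(∑ T' ∈ P.filter (fun T' => a.1 ∈ T' ∧ a.2 ∈ T'), z T')
        ≤ w a - ∑ T' ∈ P.filter (fun T' => a.2 ∈ T'), z T' := by
    intro a ha
    have e1 : (P.filter (fun T' => a.2 ∈ T')).filter (fun T' => a.1 ∈ T')
        = P.filter (fun T' => a.1 ∈ T' ∧ a.2 ∈ T') := by
      ext T'; simp only [Finset.mem_filter]; tauto
    have e2 : (P.filter (fun T' => a.2 ∈ T')).filter (fun T' => ¬ a.1 ∈ T')
        = P.filter (fun T' : Finset V => T'.Nonempty ∧ a.1 ∉ T' ∧ a.2 ∈ T') := by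
      ext T'; simp only [Finset.mem_filter]
      constructor
      · rintro ⟨⟨hPm, h2⟩, h1⟩; exact ⟨hPm, ⟨a.2, h2⟩, h1, h2⟩
      · rintro ⟨hPm, _, h1, h2⟩; exact ⟨⟨hPm, h2⟩, h1⟩
    have hsplit : ∑ T' ∈ P.filter (fun T' => a.2 ∈ T'), z T'
        = ∑ T' ∈ P.filter (fun T' : Finset V => T'.Nonempty ∧ a.1 ∉ T' ∧ a.2 ∈ T'), z T'
          + ∑ T' ∈ P.filter (fun T' => a.1 ∈ T' ∧ a.2 ∈ T'), z T' := by
      rw [← e1, ← e2, add_comm]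
      exact (Finset.sum_filter_add_sum_filter_not _ _ _).symm
    have hc := hcon a (hBA ha)
    rw [hsplit]
    linarith
  have hsum := Finset.sum_le_sum key
  rw [Finset.sum_neg_distrib] at hsum
  refine le_trans (neg_le_neg ?_) hsum
  have hswap : ∑ a ∈ B, ∑ T' ∈ P.filter (fun T' => a.1 ∈ T' ∧ a.2 ∈ T'), z T'
      = ∑ T' ∈ P, ((B.filter (fun a => a.1 ∈ T' ∧ a.2 ∈ T')).card : ℤ) * z T' := by
    have h1 : ∀ a ∈ B, ∑ T' ∈ P.filter (fun T' => a.1 ∈ T' ∧ a.2 ∈ T'), z T'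
        = ∑ T' ∈ P, if a.1 ∈ T' ∧ a.2 ∈ T' then z T' else 0 := by
      intro a _; rw [Finset.sum_filter]
    rw [Finset.sum_congr rfl h1, Finset.sum_comm]
    refine Finset.sum_congr rfl fun T' _ => ?_
    rw [← Finset.sum_filter, Finset.sum_const, nsmul_eq_mul]
  rw [hswap]
  rw [← Finset.sum_filter_of_ne (p := fun T' : Finset V => T'.Nonempty)
      (f := fun T' => ((B.filter (fun a => a.1 ∈ T' ∧ a.2 ∈ T')).card : ℤ) * z T')
      (by
        intro T' _ hne
        by_contra h
        rw [Finset.not_nonempty_iff_eq_empty] at h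
        subst h
        simp at hne)]
  refine Finset.sum_le_sum fun T' hT' => ?_
  have hTne : T'.Nonempty := (Finset.mem_filter.mp hT').2
  have hcard := branching_inner_card hdeg hnc T' hTne
  have hzpos := hz T' hTne
  have : ((B.filter (fun a => a.1 ∈ T' ∧ a.2 ∈ T')).card : ℤ) ≤ (T'.card : ℤ) - 1 := by
    omega
  exact mul_le_mul_of_nonneg_right this hzpos
end

section
/- Let D=(V,A) be a digraph, {S,T} a partition of V with A = A[S] ∪ A[T] ∪ A[S,T], and w ∈ Z₊^A. For ξ ∈ {0,1}^{A[S,T]}, the minimum weight of an S-T bibranching B with B[S,T] = supp(ξ) equals w·ξ + g_S(∂ξ|_S) + g_T(−∂ξ|_T), when ξ is feasible (i.e., ∂ξ|_S ∈ dom g_S and −∂ξ|_T ∈ dom g_T). Consequently the shortest S-T bibranching value equals the minimum over ξ of w·ξ + g_S(∂ξ|_S) + g_T(−∂ξ|_T). -/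
open scoped Classical
open Finset

variable {V : Type*} [Fintype V] [DecidableEq V]

/-- Arcs of `B` with both ends in `X`. -/
def arcsIn (X : Finset V) (B : Finset (V × V)) : Finset (V × V) :=
  B.filter (fun a => a.1 ∈ X ∧ a.2 ∈ X)

/-- Arcs of `B` from `S` to `T`. -/
def arcsST (S T : Finset V) (B : Finset (V × V)) : Finset (V × V) :=
  B.filter (fun a => a.1 ∈ S ∧ a.2 ∈ T)

/-- A cobranching: an arc set whose reversal is a branching. -/
def IsCobranching (A B : Finset (V × V)) : Prop :=
  IsBranching (A.image Prod.swap) (B.image Prod.swap)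

/-- `g_T(η)`: minimum weight of a branching `B_T` of `D[T]` with
`R(B_T) = supp⁺(η)`; `⊤` if `η ∉ ℤ₊^T` or no such branching exists. -/
noncomputable def gT (T : Finset V) (A : Finset (V × V)) (w : V × V → ℤ) (η : V → ℤ) :
    WithTop ℤ :=
  if ∀ v ∈ T, 0 ≤ η v then
    ((arcsIn T A).powerset.filter (fun B => IsBranching (arcsIn T A) B ∧
        T.filter (fun v => ∀ a ∈ B, a.2 ≠ v) = T.filter (fun v => 0 < η v))).inf
      (fun B => ((∑ a ∈ B, w a : ℤ) : WithTop ℤ))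
  else ⊤

/-- `g_S(η)`: minimum weight of a cobranching `B_S` of `D[S]` with
`R*(B_S) = supp⁺(η)`; `⊤` if `η ∉ ℤ₊^S` or no such cobranching exists. -/
noncomputable def gS (S : Finset V) (A : Finset (V × V)) (w : V × V → ℤ) (η : V → ℤ) :
    WithTop ℤ :=
  if ∀ u ∈ S, 0 ≤ η u then
    ((arcsIn S A).powerset.filter (fun B => IsCobranching (arcsIn S A) B ∧
        S.filter (fun u => ∀ a ∈ B, a.1 ≠ u) = S.filter (fun u => 0 < η u))).inf
      (fun B => ((∑ a ∈ B, w a : ℤ) : WithTop ℤ))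
  else ⊤

/-- `∂ξ|_S`: out-degree vector of a flow (arc set) `F ⊆ A[S,T]`. -/
def outd (F : Finset (V × V)) : V → ℤ := fun u => ((F.filter (fun a => a.1 = u)).card : ℤ)

/-- `−∂ξ|_T`: in-degree vector of a flow (arc set) `F ⊆ A[S,T]`. -/
def ind (F : Finset (V × V)) : V → ℤ := fun v => ((F.filter (fun a => a.2 = v)).card : ℤ)

/-- The objective of the M♮-convex submodular flow formulation (MSF):
`w·ξ + g_S(∂ξ|_S) + g_T(−∂ξ|_T)`. -/
noncomputable def msfObj (S T : Finset V) (A : Finset (V × V)) (w : V × V → ℤ)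
    (F : Finset (V × V)) : WithTop ℤ :=
  ((∑ a ∈ F, w a : ℤ) : WithTop ℤ) + gS S A w (outd F) + gT T A w (ind F)
/-- `B` is an `S`-`T` bibranching: `B[S]` is a cobranching with
`R*(B[S]) = supp⁺(∂⁺B[S,T])` and `B[T]` is a branching with
`R(B[T]) = supp⁺(∂⁻B[S,T])`. -/
def IsBibranching (S T : Finset V) (A B : Finset (V × V)) : Prop :=
  B ⊆ A ∧
  IsCobranching (arcsIn S A) (arcsIn S B) ∧
    S.filter (fun u => ∀ a ∈ arcsIn S B, a.1 ≠ u)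
      = S.filter (fun u => ∃ a ∈ arcsST S T B, a.1 = u) ∧
  IsBranching (arcsIn T A) (arcsIn T B) ∧
    T.filter (fun v => ∀ a ∈ arcsIn T B, a.2 ≠ v)
      = T.filter (fun v => ∃ a ∈ arcsST S T B, a.2 = v)


lemma supp_outd (F : Finset (V × V)) (u : V) : 0 < outd F u ↔ ∃ a ∈ F, a.1 = u := by
  simp [outd, Int.natCast_pos, Finset.card_pos, Finset.filter_nonempty_iff]

lemma supp_ind (F : Finset (V × V)) (v : V) : 0 < ind F v ↔ ∃ a ∈ F, a.2 = v := by
  simp [ind, Int.natCast_pos, Finset.card_pos, Finset.filter_nonempty_iff]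

lemma fiber_eq (S T : Finset V) (hdisj : Disjoint S T) (hu : S ∪ T = Finset.univ)
    (A : Finset (V × V)) (hA : ∀ a ∈ A, ¬ (a.1 ∈ T ∧ a.2 ∈ S))
    (w : V × V → ℤ)
    (F : Finset (V × V)) (hF : F ⊆ arcsST S T A) :
    (A.powerset.filter (fun B => IsBibranching S T A B ∧ arcsST S T B = F)).inf
        (fun B => ((∑ a ∈ B, w a : ℤ) : WithTop ℤ))
      = msfObj S T A w F := by
  have hST : ∀ v ∈ S, v ∉ T := fun v hv => Finset.disjoint_left.mp hdisj hv
  have hTS : ∀ v ∈ T, v ∉ S := fun v hv => Finset.disjoint_right.mp hdisj hv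
  have hFmem : ∀ a ∈ F, a.1 ∈ S ∧ a.2 ∈ T := fun a ha => (Finset.mem_filter.mp (hF ha)).2
  have hVmem : ∀ v : V, v ∈ S ∨ v ∈ T := fun v => by
    have : v ∈ S ∪ T := hu ▸ Finset.mem_univ v
    exact Finset.mem_union.mp this
  have classify : ∀ a ∈ A,
      (a.1 ∈ S ∧ a.2 ∈ S) ∨ (a.1 ∈ T ∧ a.2 ∈ T) ∨ (a.1 ∈ S ∧ a.2 ∈ T) := by
    intro a ha
    rcases hVmem a.1 with h1 | h1 <;> rcases hVmem a.2 with h2 | h2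
    · exact Or.inl ⟨h1, h2⟩
    · exact Or.inr (Or.inr ⟨h1, h2⟩)
    · exact absurd ⟨h1, h2⟩ (hA a ha)
    · exact Or.inr (Or.inl ⟨h1, h2⟩)
  have hgSdef : gS S A w (outd F) =
      ((arcsIn S A).powerset.filter (fun B => IsCobranching (arcsIn S A) B ∧
          S.filter (fun u => ∀ a ∈ B, a.1 ≠ u) = S.filter (fun u => 0 < outd F u))).inf
        (fun B => ((∑ a ∈ B, w a : ℤ) : WithTop ℤ)) := by
    rw [gS, if_pos]; intro u _; exact Int.natCast_nonneg _
  have hgTdef : gT T A w (ind F) =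
      ((arcsIn T A).powerset.filter (fun B => IsBranching (arcsIn T A) B ∧
          T.filter (fun v => ∀ a ∈ B, a.2 ≠ v) = T.filter (fun v => 0 < ind F v))).inf
        (fun B => ((∑ a ∈ B, w a : ℤ) : WithTop ℤ)) := by
    rw [gT, if_pos]; intro v _; exact Int.natCast_nonneg _
  have hsuppS : S.filter (fun u => 0 < outd F u) = S.filter (fun u => ∃ a ∈ F, a.1 = u) :=
    Finset.filter_congr (fun u _ => supp_outd F u)
  have hsuppT : T.filter (fun v => 0 < ind F v) = T.filter (fun v => ∃ a ∈ F, a.2 = v) :=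
    Finset.filter_congr (fun v _ => supp_ind F v)
  apply le_antisymm
  · -- LHS ≤ RHS : exhibit a bibranching from optimal B_S, B_T (or RHS = ⊤)
    by_cases htopS : gS S A w (outd F) = ⊤
    · simp [msfObj, htopS]
    by_cases htopT : gT T A w (ind F) = ⊤
    · simp [msfObj, htopT]
    have hneS : ((arcsIn S A).powerset.filter (fun B => IsCobranching (arcsIn S A) B ∧
        S.filter (fun u => ∀ a ∈ B, a.1 ≠ u) = S.filter (fun u => 0 < outd F u))).Nonempty := by
      rw [Finset.nonempty_iff_ne_empty]
      intro h
      rw [hgSdef, h, Finset.inf_empty] at htopS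
      exact htopS rfl
    have hneT : ((arcsIn T A).powerset.filter (fun B => IsBranching (arcsIn T A) B ∧
        T.filter (fun v => ∀ a ∈ B, a.2 ≠ v) = T.filter (fun v => 0 < ind F v))).Nonempty := by
      rw [Finset.nonempty_iff_ne_empty]
      intro h
      rw [hgTdef, h, Finset.inf_empty] at htopT
      exact htopT rfl
    obtain ⟨BS, hBSmem, hBSval⟩ := Finset.exists_mem_eq_inf _ hneS
      (fun B => ((∑ a ∈ B, w a : ℤ) : WithTop ℤ))
    obtain ⟨BT, hBTmem, hBTval⟩ := Finset.exists_mem_eq_inf _ hneT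
      (fun B => ((∑ a ∈ B, w a : ℤ) : WithTop ℤ))
    obtain ⟨hBSsub, hBScob, hBSroot⟩ := Finset.mem_filter.mp hBSmem
    obtain ⟨hBTsub, hBTbr, hBTroot⟩ := Finset.mem_filter.mp hBTmem
    rw [Finset.mem_powerset] at hBSsub hBTsub
    have hBSends : ∀ a ∈ BS, a.1 ∈ S ∧ a.2 ∈ S := fun a ha =>
      (Finset.mem_filter.mp (hBSsub ha)).2
    have hBTends : ∀ a ∈ BT, a.1 ∈ T ∧ a.2 ∈ T := fun a ha =>
      (Finset.mem_filter.mp (hBTsub ha)).2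
    set B : Finset (V × V) := BS ∪ BT ∪ F with hBdef
    have hBA : B ⊆ A := by
      intro a ha
      rcases Finset.mem_union.mp ha with h | h
      · rcases Finset.mem_union.mp h with h | h
        · exact Finset.filter_subset _ _ (hBSsub h)
        · exact Finset.filter_subset _ _ (hBTsub h)
      · exact Finset.filter_subset _ _ (hF h)
    have e1 : arcsIn S B = BS := by
      ext a
      simp only [arcsIn, Finset.mem_filter, hBdef, Finset.mem_union]
      constructor
      · rintro ⟨(h | h) | h, h1, h2⟩
        · exact h
        · exact absurd h2 (hTS _ (hBTends a h).2)
        · exact absurd h2 (hTS _ (hFmem a h).2)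
      · intro h
        exact ⟨Or.inl (Or.inl h), (hBSends a h).1, (hBSends a h).2⟩
    have e2 : arcsIn T B = BT := by
      ext a
      simp only [arcsIn, Finset.mem_filter, hBdef, Finset.mem_union]
      constructor
      · rintro ⟨(h | h) | h, h1, h2⟩
        · exact absurd h1 (hST _ (hBSends a h).1)
        · exact h
        · exact absurd h1 (hST _ (hFmem a h).1)
      · intro h
        exact ⟨Or.inl (Or.inr h), (hBTends a h).1, (hBTends a h).2⟩
    have e3 : arcsST S T B = F := by
      ext a
      simp only [arcsST, Finset.mem_filter, hBdef, Finset.mem_union]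
      constructor
      · rintro ⟨(h | h) | h, h1, h2⟩
        · exact absurd h2 (hST _ (hBSends a h).2)
        · exact absurd h1 (hTS _ (hBTends a h).1)
        · exact h
      · intro h
        exact ⟨Or.inr h, (hFmem a h).1, (hFmem a h).2⟩
    have hbib : IsBibranching S T A B := by
      refine ⟨hBA, ?_, ?_, ?_, ?_⟩
      · rw [e1]; exact hBScob
      · rw [e1, e3, hBSroot, hsuppS]
      · rw [e2]; exact hBTbr
      · rw [e2, e3, hBTroot, hsuppT]
    have d1 : Disjoint BS BT := Finset.disjoint_left.mpr fun a h1 h2 =>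
      hST _ (hBSends a h1).1 (hBTends a h2).1
    have d2 : Disjoint (BS ∪ BT) F := Finset.disjoint_left.mpr fun a h1 h2 => by
      rcases Finset.mem_union.mp h1 with h | h
      · exact hST _ (hBSends a h).2 (hFmem a h2).2
      · exact hTS _ (hBTends a h).1 (hFmem a h2).1
    have hsum : (∑ a ∈ B, w a) = (∑ a ∈ BS, w a) + (∑ a ∈ BT, w a) + (∑ a ∈ F, w a) := by
      rw [hBdef, Finset.sum_union d2, Finset.sum_union d1]
    refine le_trans (Finset.inf_le (Finset.mem_filter.mpr
      ⟨Finset.mem_powerset.mpr hBA, hbib, e3⟩)) (le_of_eq ?_)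
    rw [hsum, msfObj, hgSdef, hgTdef, hBSval, hBTval]
    push_cast
    abel
  · -- RHS ≤ LHS
    apply Finset.le_inf
    intro B hB
    obtain ⟨hBA, hbib, hBF⟩ := Finset.mem_filter.mp hB
    rw [Finset.mem_powerset] at hBA
    obtain ⟨_, hBScob, hBSroot, hBTbr, hBTroot⟩ := hbib
    have hBSends : ∀ a ∈ arcsIn S B, a.1 ∈ S ∧ a.2 ∈ S := fun a ha =>
      (Finset.mem_filter.mp ha).2
    have hBTends : ∀ a ∈ arcsIn T B, a.1 ∈ T ∧ a.2 ∈ T := fun a ha =>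
      (Finset.mem_filter.mp ha).2
    have hBdecomp : B = arcsIn S B ∪ arcsIn T B ∪ arcsST S T B := by
      ext a
      simp only [arcsIn, arcsST, Finset.mem_union, Finset.mem_filter]
      constructor
      · intro h
        rcases classify a (hBA h) with h' | h' | h'
        · exact Or.inl (Or.inl ⟨h, h'⟩)
        · exact Or.inl (Or.inr ⟨h, h'⟩)
        · exact Or.inr ⟨h, h'⟩
      · rintro ((⟨h, -⟩ | ⟨h, -⟩) | ⟨h, -⟩) <;> exact h
    have d1 : Disjoint (arcsIn S B) (arcsIn T B) := Finset.disjoint_left.mpr fun a h1 h2 =>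
      hST _ (hBSends a h1).1 (hBTends a h2).1
    have d2 : Disjoint (arcsIn S B ∪ arcsIn T B) (arcsST S T B) :=
      Finset.disjoint_left.mpr fun a h1 h2 => by
        have h2' := (Finset.mem_filter.mp h2).2
        rcases Finset.mem_union.mp h1 with h | h
        · exact hST _ (hBSends a h).2 h2'.2
        · exact hTS _ (hBTends a h).1 h2'.1
    have hsum : (∑ a ∈ B, w a) =
        (∑ a ∈ arcsIn S B, w a) + (∑ a ∈ arcsIn T B, w a) + (∑ a ∈ F, w a) := by
      conv_lhs => rw [hBdecomp]
      rw [Finset.sum_union d2, Finset.sum_union d1, hBF]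
    have hgSle : gS S A w (outd F) ≤ ((∑ a ∈ arcsIn S B, w a : ℤ) : WithTop ℤ) := by
      rw [hgSdef]
      apply Finset.inf_le
      refine Finset.mem_filter.mpr ⟨Finset.mem_powerset.mpr
        (Finset.filter_subset_filter _ hBA), hBScob, ?_⟩
      rw [hBSroot, hBF, hsuppS]
    have hgTle : gT T A w (ind F) ≤ ((∑ a ∈ arcsIn T B, w a : ℤ) : WithTop ℤ) := by
      rw [hgTdef]
      apply Finset.inf_le
      refine Finset.mem_filter.mpr ⟨Finset.mem_powerset.mpr
        (Finset.filter_subset_filter _ hBA), hBTbr, ?_⟩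
      rw [hBTroot, hBF, hsuppT]
    calc msfObj S T A w F
        ≤ ((∑ a ∈ F, w a : ℤ) : WithTop ℤ) + ((∑ a ∈ arcsIn S B, w a : ℤ) : WithTop ℤ)
            + ((∑ a ∈ arcsIn T B, w a : ℤ) : WithTop ℤ) :=
          add_le_add (add_le_add le_rfl hgSle) hgTle
      _ = ((∑ a ∈ B, w a : ℤ) : WithTop ℤ) := by
          rw [hsum]; push_cast; abel

/-- For a feasible flow `F`, the minimum weight of an `S`-`T` bibranching `B`
with `B[S,T] = F` equals `w·F + g_S(∂F|_S) + g_T(−∂F|_T)`; consequently the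
shortest bibranching value equals the minimum of the MSF objective. -/
theorem bibranching_decomposition_via_MSF
    (S T : Finset V) (hdisj : Disjoint S T) (hu : S ∪ T = Finset.univ)
    (hS : S.Nonempty) (hT : T.Nonempty)
    (A : Finset (V × V)) (hA : ∀ a ∈ A, ¬ (a.1 ∈ T ∧ a.2 ∈ S))
    (w : V × V → ℤ) (hw : ∀ a ∈ A, 0 ≤ w a)
    (F : Finset (V × V)) (hF : F ⊆ arcsST S T A)
    (hfS : gS S A w (outd F) ≠ ⊤) (hfT : gT T A w (ind F) ≠ ⊤) :
    ((A.powerset.filter (fun B => IsBibranching S T A B ∧ arcsST S T B = F)).inf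
        (fun B => ((∑ a ∈ B, w a : ℤ) : WithTop ℤ))
      = msfObj S T A w F) ∧
    ((A.powerset.filter (fun B => IsBibranching S T A B)).inf
        (fun B => ((∑ a ∈ B, w a : ℤ) : WithTop ℤ))
      = (arcsST S T A).powerset.inf (fun F' => msfObj S T A w F')) := by
  have h1 := fiber_eq S T hdisj hu A hA w F hF
  refine ⟨h1, ?_⟩
  apply le_antisymm
  · apply Finset.le_inf
    intro F' hF'
    rw [Finset.mem_powerset] at hF'
    rw [← fiber_eq S T hdisj hu A hA w F' hF']
    apply Finset.inf_mono
    intro B hB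
    obtain ⟨hBsub, hbib, -⟩ := Finset.mem_filter.mp hB
    exact Finset.mem_filter.mpr ⟨hBsub, hbib⟩
  · apply Finset.le_inf
    intro B hB
    obtain ⟨hBsub, hbib⟩ := Finset.mem_filter.mp hB
    have hBA := Finset.mem_powerset.mp hBsub
    have hF'sub : arcsST S T B ⊆ arcsST S T A := Finset.filter_subset_filter _ hBA
    calc ((arcsST S T A).powerset.inf (fun F' => msfObj S T A w F'))
        ≤ msfObj S T A w (arcsST S T B) :=
          Finset.inf_le (Finset.mem_powerset.mpr hF'sub)
      _ = (A.powerset.filter (fun B' => IsBibranching S T A B' ∧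
            arcsST S T B' = arcsST S T B)).inf
            (fun B' => ((∑ a ∈ B', w a : ℤ) : WithTop ℤ)) :=
          (fiber_eq S T hdisj hu A hA w _ hF'sub).symm
      _ ≤ ((∑ a ∈ B, w a : ℤ) : WithTop ℤ) :=
          Finset.inf_le (Finset.mem_filter.mpr ⟨hBsub, hbib, rfl⟩)
end
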